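/- arXiv:math/0310077 — 9 statements merged into one kernel-verified Lean document; each statement's English description precedes it below -/
import Mathlib

section
/- Assume Re(β) < 0. Then the function q* is well-defined (the integral defining it converges absolutely for every u > 0), q* is differentiable at every u > 0, and it satisfies the advanced-argument difference differential equation u·(q*)′(u) = Σ_{j=0}^m α_j q*(u + v_j) for all u > 0. -/
open MeasureTheory Filter Set

/-- The integrand in the definition of `q*` (case `Re β < 0`):
`x ↦ x^(−β−1) · exp(−u x + ∑_{j=1}^m α_j ∫_0^x (1 − e^{−v_j t})/t dt)`. -/
noncomputable def qstarIntegrand (m : ℕ) (v : ℕ → ℝ) (α : ℕ → ℂ) (u x : ℝ) : ℂ :=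
  (x : ℂ) ^ (-(∑ j ∈ Finset.range (m + 1), α j) - 1) *
    Complex.exp (-(u * x : ℝ) +
      ∑ j ∈ Finset.Icc 1 m,
        α j * ((∫ t in (0 : ℝ)..x, (1 - Real.exp (-(v j) * t)) / t : ℝ) : ℂ))

/-- The function `q*` of Definition 3.1 (case `Re β < 0`). -/
noncomputable def qstar (m : ℕ) (v : ℕ → ℝ) (α : ℕ → ℂ) (u : ℝ) : ℂ :=
  (Complex.Gamma (-(∑ j ∈ Finset.range (m + 1), α j)))⁻¹ *
    ∫ x in Set.Ioi (0 : ℝ), qstarIntegrand m v α u x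

/-!
Write `F_s(u, x) = x ^ s * exp (-u x + S x)` with `S x = ∑_{j ≥ 1} α_j Ein (v_j x)`, so that
`q* u = Γ(-β)⁻¹ ∫₀^∞ F_{-β-1}(u, x) dx`. Since `0 ≤ Ein (v x) ≤ v + log (max x 1)` for `v ≥ 0`,
`|F_s(u, x)| ≤ K x ^ Re s (1 + x ^ A) e^{-c x}` locally uniformly in `u > 0`; this
gives absolute convergence and differentiation under the integral sign, with `∂_u F_s = -F_{s+1}`.

The equation comes from integrating `∂_x F_{s+1}` over `(0, ∞)`, which gives `0` because
`F_{s+1}` vanishes at both ends. As `x S'(x) = ∑ α_j (1 - e^{-v_j x})` and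
`e^{-v x} F_s(u, x) = F_s(u + v, x)`, that integral equals
`(s + 1) I(u) + ∑ α_j (I(u) - I(u + v_j)) - u ∫ F_{s+1}(u, x) dx` with `I(u) = ∫ F_s(u, x) dx`,
and for `s = -β - 1` this is `u (q*)'(u) = ∑_{j ≥ 0} α_j q*(u + v_j)` (recall `v_0 = 0`).
-/

namespace QStar

open Real Topology

noncomputable def einKernel (w t : ℝ) : ℝ := (1 - exp (-w * t)) / t

/-- `ein w x = Ein (w x)`, where `Ein` is the complementary exponential integral. -/
noncomputable def ein (w x : ℝ) : ℝ := ∫ t in (0 : ℝ)..x, einKernel w t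

section Ein

variable {w t x : ℝ}

-- At `t = 0` the kernel has the junk value `0 / 0 = 0` rather than its limit `w`; away from `0`
-- it is a difference quotient, hence a.e. equal to a continuous function.
theorem einKernel_eq_dslope (ht : t ≠ 0) :
    einKernel w t = dslope (fun t => -exp (-w * t)) 0 t := by
  rw [dslope_of_ne _ ht, slope_def_field, einKernel]
  simp only [mul_zero, exp_zero, sub_zero]
  ring

theorem continuous_dslope_neg_exp (w : ℝ) : Continuous (dslope (fun t => -exp (-w * t)) 0) := by
  have hd : Differentiable ℝ fun t => -exp (-w * t) := by fun_prop
  exact continuousOn_univ.mp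
    ((continuousOn_dslope Filter.univ_mem).mpr ⟨hd.continuous.continuousOn, hd 0⟩)

theorem intervalIntegrable_einKernel (w a b : ℝ) :
    IntervalIntegrable (einKernel w) volume a b := by
  refine (intervalIntegrable_congr_ae ?_).mp
    ((continuous_dslope_neg_exp w).intervalIntegrable (μ := volume) a b)
  filter_upwards [ae_restrict_of_ae (Measure.ae_ne volume 0)] with t ht
  exact (einKernel_eq_dslope ht).symm

theorem continuous_ein (w : ℝ) : Continuous (ein w) :=
  intervalIntegral.continuous_primitive (intervalIntegrable_einKernel w) 0

theorem hasDerivAt_ein (hx : x ≠ 0) : HasDerivAt (ein w) (einKernel w x) x :=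
  intervalIntegral.integral_hasDerivAt_right (intervalIntegrable_einKernel w 0 x)
    (Measurable.aestronglyMeasurable (by unfold einKernel; fun_prop)).stronglyMeasurableAtFilter
    (by unfold einKernel; fun_prop (disch := exact hx))

theorem einKernel_nonneg (hw : 0 ≤ w) (ht : 0 ≤ t) : 0 ≤ einKernel w t :=
  div_nonneg (sub_nonneg.mpr (exp_le_one_iff.mpr (by nlinarith))) ht

theorem einKernel_le (hw : 0 ≤ w) (ht : 0 ≤ t) : einKernel w t ≤ w := by
  rcases ht.eq_or_lt with rfl | ht
  · simpa [einKernel] using hw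
  · rw [einKernel, div_le_iff₀ ht]
    linarith [add_one_le_exp (-w * t)]

theorem einKernel_le_inv (ht : 0 < t) : einKernel w t ≤ t⁻¹ := by
  rw [einKernel, div_eq_mul_inv]
  exact mul_le_of_le_one_left (inv_pos.mpr ht).le (by linarith [exp_pos (-w * t)])

theorem ein_nonneg (hw : 0 ≤ w) (hx : 0 ≤ x) : 0 ≤ ein w x :=
  intervalIntegral.integral_nonneg hx fun _ ht => einKernel_nonneg hw ht.1

theorem ein_le_mul (hw : 0 ≤ w) (hx : 0 ≤ x) : ein w x ≤ w * x := by
  simpa [ein, mul_comm] using intervalIntegral.integral_mono_on hx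
    (intervalIntegrable_einKernel w 0 x) intervalIntegrable_const fun _ ht => einKernel_le hw ht.1

theorem ein_le_add_log (hw : 0 ≤ w) (hx : 0 < x) : ein w x ≤ w + log (max x 1) := by
  rcases le_total x 1 with hx1 | hx1
  · rw [max_eq_right hx1, log_one, add_zero]
    nlinarith [ein_le_mul hw hx.le]
  have hinv : IntervalIntegrable (fun t : ℝ => t⁻¹) volume 1 x :=
    intervalIntegral.intervalIntegrable_inv (fun t ht => by
      rw [uIcc_of_le hx1] at ht; linarith [ht.1]) continuousOn_id
  calc ein w x = ein w 1 + ∫ t in (1 : ℝ)..x, einKernel w t :=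
        (intervalIntegral.integral_add_adjacent_intervals (intervalIntegrable_einKernel w 0 1)
          (intervalIntegrable_einKernel w 1 x)).symm
    _ ≤ w * 1 + ∫ t in (1 : ℝ)..x, t⁻¹ := by
        gcongr
        · exact ein_le_mul hw zero_le_one
        · exact intervalIntegral.integral_mono_on hx1 (intervalIntegrable_einKernel w 1 x) hinv
            fun t ht => einKernel_le_inv (by linarith [ht.1])
    _ = w + log (max x 1) := by
        rw [integral_inv_of_pos one_pos (by linarith), max_eq_left hx1, mul_one, div_one]

theorem ofReal_mul_einKernel (w x : ℝ) :
    (x : ℂ) * (einKernel w x : ℂ) = 1 - Complex.exp (-(w * x : ℝ)) := by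
  rcases eq_or_ne x 0 with rfl | hx
  · simp
  · rw [einKernel, Complex.ofReal_div, mul_div_cancel₀ _ (Complex.ofReal_ne_zero.mpr hx)]
    push_cast
    ring_nf

end Ein

theorem rpow_mul_max_one_rpow_le {x : ℝ} (hx : 0 < x) (p A : ℝ) :
    x ^ p * max x 1 ^ A ≤ x ^ p + x ^ (p + A) := by
  rcases le_total x 1 with hx1 | hx1
  · rw [max_eq_right hx1, one_rpow, mul_one]
    linarith [rpow_nonneg hx.le (p + A)]
  · rw [max_eq_left hx1, ← rpow_add hx]
    linarith [rpow_nonneg hx.le p]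

theorem integrableOn_rpow_add_rpow_mul_exp_neg_mul {p A c : ℝ} (hp : -1 < p) (hA : 0 ≤ A)
    (hc : 0 < c) : IntegrableOn (fun x : ℝ => (x ^ p + x ^ (p + A)) * exp (-c * x)) (Ioi 0) := by
  have h (q : ℝ) (hq : -1 < q) : IntegrableOn (fun x : ℝ => x ^ q * exp (-c * x)) (Ioi 0) := by
    simpa using integrableOn_rpow_mul_exp_neg_mul_rpow hq zero_lt_one hc
  exact ((h p hp).add (h (p + A) (by linarith))).congr_fun (fun x _ => (add_mul _ _ _).symm)
    measurableSet_Ioi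

theorem tendsto_rpow_add_rpow_mul_exp_neg_mul_atTop (p A : ℝ) {c : ℝ} (hc : 0 < c) :
    Tendsto (fun x : ℝ => (x ^ p + x ^ (p + A)) * exp (-c * x)) atTop (𝓝 0) := by
  simpa only [add_mul, add_zero] using (tendsto_rpow_mul_exp_neg_mul_atTop_nhds_zero p c hc).add
    (tendsto_rpow_mul_exp_neg_mul_atTop_nhds_zero (p + A) c hc)

/-- `qstarIntegrand` is the case `s = -β - 1`, `S = einSum (Finset.Icc 1 m) v α`. -/
noncomputable def cpowMulExp (s : ℂ) (S : ℝ → ℂ) (u x : ℝ) : ℂ :=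
  (x : ℂ) ^ s * Complex.exp (-(u * x : ℝ) + S x)

section CpowMulExp

variable {s : ℂ} {S : ℝ → ℂ} {u x C A : ℝ}

theorem add_one_ne_zero_of_neg_one_lt_re (hs : -1 < s.re) : s + 1 ≠ 0 := fun h => by
  have := congrArg Complex.re h
  simp only [Complex.add_re, Complex.one_re, Complex.zero_re] at this
  linarith

theorem exp_neg_mul_cpowMulExp (w : ℝ) :
    Complex.exp (-(w * x : ℝ)) * cpowMulExp s S u x = cpowMulExp s S (u + w) x := by
  rw [cpowMulExp, cpowMulExp, mul_left_comm, ← Complex.exp_add]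
  congr 2
  push_cast
  ring

theorem ofReal_mul_cpowMulExp (hs : s + 1 ≠ 0) (x : ℝ) :
    (x : ℂ) * cpowMulExp s S u x = cpowMulExp (s + 1) S u x := by
  rcases eq_or_ne x 0 with rfl | hx
  · simp [cpowMulExp, Complex.zero_cpow hs]
  · rw [cpowMulExp, cpowMulExp, Complex.cpow_add _ _ (Complex.ofReal_ne_zero.mpr hx),
      Complex.cpow_one]
    ring

theorem norm_cpowMulExp_le (hSle : ∀ x > 0, (S x).re ≤ C + A * log (max x 1)) {c : ℝ}
    (hcu : c ≤ u) (hx : 0 < x) :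
    ‖cpowMulExp s S u x‖ ≤ exp C * ((x ^ s.re + x ^ (s.re + A)) * exp (-c * x)) := by
  have hexp : exp (-(u * x) + (S x).re) ≤ exp C * max x 1 ^ A * exp (-c * x) := by
    rw [rpow_def_of_pos (lt_max_of_lt_right one_pos), ← exp_add, ← exp_add]
    exact exp_le_exp.mpr (by nlinarith [hSle x hx])
  calc ‖cpowMulExp s S u x‖ = x ^ s.re * exp (-(u * x) + (S x).re) := by
        simp [cpowMulExp, Complex.norm_cpow_eq_rpow_re_of_pos hx, Complex.norm_exp]
    _ ≤ x ^ s.re * (exp C * max x 1 ^ A * exp (-c * x)) := by gcongr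
    _ = exp C * (x ^ s.re * max x 1 ^ A * exp (-c * x)) := by ring
    _ ≤ _ := by gcongr; exact rpow_mul_max_one_rpow_le hx _ _

theorem continuousOn_cpowMulExp (hS : Continuous S) (s : ℂ) (u : ℝ) :
    ContinuousOn (cpowMulExp s S u) (Ioi 0) := fun x hx =>
  ((Complex.continuousAt_ofReal_cpow_const x s (Or.inr (ne_of_gt hx))).mul
    (by fun_prop : Continuous fun x : ℝ => Complex.exp (-(u * x : ℝ) + S x)).continuousAt)
    |>.continuousWithinAt

theorem integrableOn_cpowMulExp (hs : -1 < s.re) (hS : Continuous S)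
    (hSle : ∀ x > 0, (S x).re ≤ C + A * log (max x 1)) (hA : 0 ≤ A) (hu : 0 < u) :
    IntegrableOn (cpowMulExp s S u) (Ioi 0) :=
  ((integrableOn_rpow_add_rpow_mul_exp_neg_mul hs hA hu).const_mul (exp C)).mono'
    ((continuousOn_cpowMulExp hS s u).aestronglyMeasurable measurableSet_Ioi)
    ((ae_restrict_iff' measurableSet_Ioi).mpr
      (ae_of_all _ fun _ hx => norm_cpowMulExp_le hSle le_rfl hx))

theorem hasDerivAt_cpowMulExp_param (s : ℂ) (S : ℝ → ℂ) (u x : ℝ) :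
    HasDerivAt (fun u => cpowMulExp s S u x) (-(x : ℂ) * cpowMulExp s S u x) u := by
  have h : HasDerivAt (fun u : ℝ => -((u * x : ℝ) : ℂ) + S x) (-(x : ℂ)) u := by
    simpa using ((hasDerivAt_id u).mul_const x).ofReal_comp.neg.add_const (S x)
  exact (h.cexp.const_mul _).congr_deriv (by rw [cpowMulExp]; ring)

theorem hasDerivAt_integral_cpowMulExp (hs : -1 < s.re) (hS : Continuous S)
    (hSle : ∀ x > 0, (S x).re ≤ C + A * log (max x 1)) (hA : 0 ≤ A) (hu : 0 < u) :
    HasDerivAt (fun u => ∫ x in Ioi 0, cpowMulExp s S u x)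
      (-∫ x in Ioi 0, cpowMulExp (s + 1) S u x) u := by
  have hs1 := add_one_ne_zero_of_neg_one_lt_re hs
  have hF' (y x : ℝ) : -(x : ℂ) * cpowMulExp s S y x = -cpowMulExp (s + 1) S y x := by
    rw [neg_mul, ofReal_mul_cpowMulExp hs1]
  have hbound : ∀ᵐ x ∂volume.restrict (Ioi 0), ∀ y ∈ Metric.ball u (u / 2),
      ‖-cpowMulExp (s + 1) S y x‖ ≤
        exp C * ((x ^ (s.re + 1) + x ^ (s.re + 1 + A)) * exp (-(u / 2) * x)) := by
    refine (ae_restrict_iff' measurableSet_Ioi).mpr (ae_of_all _ fun x hx y hy => ?_)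
    have hy : u / 2 ≤ y := by
      rw [Metric.mem_ball, Real.dist_eq] at hy
      linarith [(abs_lt.mp hy).1]
    simpa using norm_cpowMulExp_le (s := s + 1) hSle hy hx
  have key := hasDerivAt_integral_of_dominated_loc_of_deriv_le
    (F' := fun y x => -cpowMulExp (s + 1) S y x) (Metric.ball_mem_nhds u (half_pos hu))
    (Eventually.of_forall fun y =>
      (continuousOn_cpowMulExp hS s y).aestronglyMeasurable measurableSet_Ioi)
    (integrableOn_cpowMulExp hs hS hSle hA hu)
    ((continuousOn_cpowMulExp hS (s + 1) u).neg.aestronglyMeasurable measurableSet_Ioi) hbound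
    ((integrableOn_rpow_add_rpow_mul_exp_neg_mul (by linarith) hA (half_pos hu)).const_mul
      (exp C))
    (ae_of_all _ fun x y _ => hF' y x ▸ hasDerivAt_cpowMulExp_param s S y x)
  simpa only [integral_neg] using key.2

theorem hasDerivAt_cpowMulExp_add_one (hs : s + 1 ≠ 0) (hx : x ≠ 0) {S' : ℂ}
    (hSd : HasDerivAt S S' x) :
    HasDerivAt (cpowMulExp (s + 1) S u) ((s + 1 - u * x + x * S') * cpowMulExp s S u x) x := by
  have hpow := hasDerivAt_ofReal_cpow_const hx hs
  rw [add_sub_cancel_right] at hpow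
  have hlin : HasDerivAt (fun y : ℝ => ((u * y : ℝ) : ℂ)) u x := by
    simpa using ((hasDerivAt_id x).const_mul u).ofReal_comp
  refine (hpow.mul (hlin.neg.add hSd).cexp).congr_deriv ?_
  simp only [cpowMulExp, Pi.add_apply, Pi.neg_apply]
  rw [Complex.cpow_add _ _ (Complex.ofReal_ne_zero.mpr hx), Complex.cpow_one]
  ring

theorem integral_cpowMulExp_of_hasDerivAt (hs : -1 < s.re) (hS : Continuous S)
    (hSle : ∀ x > 0, (S x).re ≤ C + A * log (max x 1)) (hA : 0 ≤ A) (hu : 0 < u) {S' : ℝ → ℂ}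
    (hSd : ∀ x > 0, HasDerivAt S (S' x) x)
    (hint : IntegrableOn (fun x : ℝ => x * S' x * cpowMulExp s S u x) (Ioi 0)) :
    (s + 1) * (∫ x in Ioi 0, cpowMulExp s S u x) +
        ∫ x in Ioi 0, x * S' x * cpowMulExp s S u x =
      u * ∫ x in Ioi 0, cpowMulExp (s + 1) S u x := by
  have hs1 := add_one_ne_zero_of_neg_one_lt_re hs
  have hs1' : 0 < (s + 1).re := by rw [Complex.add_re, Complex.one_re]; linarith
  have hI := integrableOn_cpowMulExp hs hS hSle hA hu
  have hI1 := integrableOn_cpowMulExp (by linarith : -1 < (s + 1).re) hS hSle hA hu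
  have hderiv (x : ℝ) (hx : x ∈ Ioi 0) : HasDerivAt (cpowMulExp (s + 1) S u)
      ((s + 1) * cpowMulExp s S u x - u * cpowMulExp (s + 1) S u x +
        x * S' x * cpowMulExp s S u x) x := by
    refine (hasDerivAt_cpowMulExp_add_one hs1 (ne_of_gt hx) (hSd x hx)).congr_deriv ?_
    rw [← ofReal_mul_cpowMulExp hs1]
    ring
  have hcont : ContinuousWithinAt (cpowMulExp (s + 1) S u) (Ici 0) 0 :=
    ((Complex.continuousAt_ofReal_cpow_const 0 (s + 1) (Or.inl hs1')).mul
      (by fun_prop : Continuous fun x : ℝ => Complex.exp (-(u * x : ℝ) + S x)).continuousAt)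
      |>.continuousWithinAt
  have hlim : Tendsto (cpowMulExp (s + 1) S u) atTop (𝓝 0) := by
    have hdom := (tendsto_rpow_add_rpow_mul_exp_neg_mul_atTop (s + 1).re A hu).const_mul (exp C)
    rw [mul_zero] at hdom
    refine squeeze_zero_norm' ?_ hdom
    filter_upwards [eventually_gt_atTop 0] with x hx
    exact norm_cpowMulExp_le hSle le_rfl hx
  have hzero : cpowMulExp (s + 1) S u 0 = 0 := by simp [cpowMulExp, Complex.zero_cpow hs1]
  have hFTC := integral_Ioi_of_hasDerivAt_of_tendsto hcont hderiv
    (((hI.const_mul _).sub (hI1.const_mul _)).add hint) hlim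
  rw [integral_add (by exact (hI.const_mul _).sub (hI1.const_mul _)) hint,
    integral_sub (hI.const_mul _) (hI1.const_mul _), integral_const_mul, integral_const_mul,
    hzero, sub_zero] at hFTC
  linear_combination hFTC

end CpowMulExp

section EinSum

variable {ι : Type*} (J : Finset ι) (v : ι → ℝ) (α : ι → ℂ)

noncomputable def einSum (x : ℝ) : ℂ := ∑ j ∈ J, α j * (ein (v j) x : ℂ)

theorem continuous_einSum : Continuous (einSum J v α) :=
  continuous_finsetSum J fun j _ =>
    continuous_const.mul (Complex.continuous_ofReal.comp (continuous_ein (v j)))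

theorem hasDerivAt_einSum {x : ℝ} (hx : x ≠ 0) :
    HasDerivAt (einSum J v α) (∑ j ∈ J, α j * (einKernel (v j) x : ℂ)) x :=
  HasDerivAt.fun_sum fun j _ => ((hasDerivAt_ein hx).ofReal_comp).const_mul (α j)

theorem re_einSum_le {J v} (hv : ∀ j ∈ J, 0 ≤ v j) {x : ℝ} (hx : 0 < x) :
    (einSum J v α x).re ≤ (∑ j ∈ J, ‖α j‖ * v j) + (∑ j ∈ J, ‖α j‖) * log (max x 1) := by
  rw [Finset.sum_mul, ← Finset.sum_add_distrib, einSum, Complex.re_sum]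
  refine Finset.sum_le_sum fun j hj => ?_
  rw [Complex.re_mul_ofReal, ← mul_add]
  calc (α j).re * ein (v j) x ≤ ‖α j‖ * ein (v j) x :=
        mul_le_mul_of_nonneg_right (Complex.re_le_norm _) (ein_nonneg (hv j hj) hx.le)
    _ ≤ _ := mul_le_mul_of_nonneg_left (ein_le_add_log (hv j hj) hx) (norm_nonneg _)

theorem integrableOn_cpowMulExp_einSum {J v} (hv : ∀ j ∈ J, 0 ≤ v j) {s : ℂ} (hs : -1 < s.re)
    {u : ℝ} (hu : 0 < u) : IntegrableOn (cpowMulExp s (einSum J v α) u) (Ioi 0) :=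
  integrableOn_cpowMulExp hs (continuous_einSum J v α) (fun _ => re_einSum_le α hv)
    (Finset.sum_nonneg fun j _ => norm_nonneg (α j)) hu

theorem hasDerivAt_integral_cpowMulExp_einSum {J v} (hv : ∀ j ∈ J, 0 ≤ v j) {s : ℂ}
    (hs : -1 < s.re) {u : ℝ} (hu : 0 < u) :
    HasDerivAt (fun u => ∫ x in Ioi 0, cpowMulExp s (einSum J v α) u x)
      (-∫ x in Ioi 0, cpowMulExp (s + 1) (einSum J v α) u x) u :=
  hasDerivAt_integral_cpowMulExp hs (continuous_einSum J v α) (fun _ => re_einSum_le α hv)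
    (Finset.sum_nonneg fun j _ => norm_nonneg (α j)) hu

theorem integral_cpowMulExp_einSum {J v} (hv : ∀ j ∈ J, 0 ≤ v j) {s : ℂ} (hs : -1 < s.re)
    {u : ℝ} (hu : 0 < u) :
    (s + 1) * (∫ x in Ioi 0, cpowMulExp s (einSum J v α) u x) +
        ∑ j ∈ J, α j * ((∫ x in Ioi 0, cpowMulExp s (einSum J v α) u x) -
          ∫ x in Ioi 0, cpowMulExp s (einSum J v α) (u + v j) x) =
      u * ∫ x in Ioi 0, cpowMulExp (s + 1) (einSum J v α) u x := by
  have hI {w : ℝ} (hw : 0 ≤ w) : IntegrableOn (cpowMulExp s (einSum J v α) (u + w)) (Ioi 0) :=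
    integrableOn_cpowMulExp_einSum α hv hs (by linarith)
  have hI₀ := integrableOn_cpowMulExp_einSum α hv hs hu
  have hpt : (fun x : ℝ => (x : ℂ) * (∑ j ∈ J, α j * (einKernel (v j) x : ℂ)) *
        cpowMulExp s (einSum J v α) u x) =
      fun x => ∑ j ∈ J, α j * (cpowMulExp s (einSum J v α) u x -
        cpowMulExp s (einSum J v α) (u + v j) x) := by
    ext x
    rw [Finset.mul_sum, Finset.sum_mul]
    refine Finset.sum_congr rfl fun j _ => ?_
    rw [← exp_neg_mul_cpowMulExp]
    linear_combination α j * cpowMulExp s (einSum J v α) u x * ofReal_mul_einKernel (v j) x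
  have hterm (j : ι) (hj : j ∈ J) :
      ∫ x in Ioi 0, α j * (cpowMulExp s (einSum J v α) u x -
        cpowMulExp s (einSum J v α) (u + v j) x) =
      α j * ((∫ x in Ioi 0, cpowMulExp s (einSum J v α) u x) -
        ∫ x in Ioi 0, cpowMulExp s (einSum J v α) (u + v j) x) := by
    rw [integral_const_mul, integral_sub hI₀ (hI (hv j hj))]
  have hIsum : IntegrableOn (fun x => ∑ j ∈ J, α j * (cpowMulExp s (einSum J v α) u x -
      cpowMulExp s (einSum J v α) (u + v j) x)) (Ioi 0) :=
    integrable_finsetSum J fun j hj => (hI₀.sub (hI (hv j hj))).const_mul (α j)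
  have key := integral_cpowMulExp_of_hasDerivAt hs (continuous_einSum J v α)
    (fun _ => re_einSum_le α hv) (Finset.sum_nonneg fun j _ => norm_nonneg (α j)) hu
    (fun _ hx => hasDerivAt_einSum J v α (ne_of_gt hx)) (hpt ▸ hIsum)
  rwa [hpt, integral_finsetSum J fun j hj => by exact (hI₀.sub (hI (hv j hj))).const_mul (α j),
    Finset.sum_congr rfl hterm] at key

end EinSum

theorem sum_range_succ_eq_add_sum_Icc {M : Type*} [AddCommMonoid M] (f : ℕ → M) (m : ℕ) :
    ∑ j ∈ Finset.range (m + 1), f j = f 0 + ∑ j ∈ Finset.Icc 1 m, f j := by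
  rw [Finset.range_eq_Ico, Finset.sum_eq_sum_Ico_succ_bot (Nat.succ_pos m),
    Nat.succ_eq_add_one, Finset.Ico_add_one_right_eq_Icc]

theorem nonneg_of_le_succ {v : ℕ → ℝ} {m : ℕ} (h0 : 0 ≤ v 0) (hv : ∀ i < m, v i ≤ v (i + 1)) :
    ∀ j ≤ m, 0 ≤ v j
  | 0, _ => h0
  | j + 1, hj => (nonneg_of_le_succ h0 hv j (by omega)).trans (hv j hj)

end QStar

open QStar

theorem stmt0_general (m : ℕ) (v : ℕ → ℝ) (α : ℕ → ℂ)
    (hv0 : v 0 = 0) (hv : ∀ i, i < m → v i < v (i + 1))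
    (hβ : (∑ j ∈ Finset.range (m + 1), α j).re < 0) :
    ∀ u : ℝ, 0 < u →
      IntegrableOn (qstarIntegrand m v α u) (Set.Ioi (0 : ℝ)) ∧
      DifferentiableAt ℝ (qstar m v α) u ∧
      (u : ℂ) * deriv (qstar m v α) u =
        ∑ j ∈ Finset.range (m + 1), α j * qstar m v α (u + v j) := by
  intro u hu
  set β := ∑ j ∈ Finset.range (m + 1), α j
  set S := einSum (Finset.Icc 1 m) v α
  have hvnn (j : ℕ) (hj : j ∈ Finset.Icc 1 m) : 0 ≤ v j :=
    nonneg_of_le_succ hv0.ge (fun i hi => (hv i hi).le) j (Finset.mem_Icc.mp hj).2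
  have hs : -1 < (-β - 1).re := by
    simp only [Complex.sub_re, Complex.neg_re, Complex.one_re]; linarith
  have hD : HasDerivAt (qstar m v α)
      ((Complex.Gamma (-β))⁻¹ * -∫ x in Ioi 0, cpowMulExp (-β - 1 + 1) S u x) u :=
    (hasDerivAt_integral_cpowMulExp_einSum α hvnn hs hu).const_mul _
  refine ⟨integrableOn_cpowMulExp_einSum α hvnn hs hu, hD.differentiableAt, ?_⟩
  have hq (w : ℝ) : qstar m v α w =
      (Complex.Gamma (-β))⁻¹ * ∫ x in Ioi 0, cpowMulExp (-β - 1) S w x := rfl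
  have key := integral_cpowMulExp_einSum α hvnn hs hu
  simp only [mul_sub, Finset.sum_sub_distrib, ← Finset.sum_mul] at key
  rw [hD.deriv, sum_range_succ_eq_add_sum_Icc, hv0, add_zero]
  simp only [hq, mul_left_comm (α _), ← Finset.mul_sum]
  linear_combination (Complex.Gamma (-β))⁻¹ * key +
    (Complex.Gamma (-β))⁻¹ * (∫ x in Ioi 0, cpowMulExp (-β - 1) S u x) *
      sum_range_succ_eq_add_sum_Icc α m

theorem stmt0 (m : ℕ) (v : ℕ → ℝ) (α : ℕ → ℂ)
    (hv0 : v 0 = 0) (hv : ∀ i, i < m → v i < v (i + 1))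
    (hα : ∀ j, 1 ≤ j → j ≤ m → α j ≠ 0)
    (hβ : (∑ j ∈ Finset.range (m + 1), α j).re < 0) :
    ∀ u : ℝ, 0 < u →
      IntegrableOn (qstarIntegrand m v α u) (Set.Ioi (0 : ℝ)) ∧
      DifferentiableAt ℝ (qstar m v α) u ∧
      (u : ℂ) * deriv (qstar m v α) u =
        ∑ j ∈ Finset.range (m + 1), α j * qstar m v α (u + v j) :=
  stmt0_general m v α hv0 hv hβ
end

section
/- Assume Re(β) < 0. Then q*(u) is asymptotic to u^β at infinity, i.e. q*(u)/u^β → 1 as the real variable u → ∞ (here u^β denotes the complex power of the positive real u). -/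
open MeasureTheory Filter Set
open scoped Topology Interval

theorem intervalIntegrable_one_sub_exp_neg_mul_div (w a b : ℝ) :
    IntervalIntegrable (fun t => (1 - Real.exp (-w * t)) / t) volume a b := by
  set h : ℝ → ℝ := fun t => 1 - Real.exp (-w * t)
  have h_cont : Continuous (dslope h 0) := by
    rw [← continuousOn_univ, continuousOn_dslope univ_mem]
    exact ⟨by fun_prop, by fun_prop⟩
  have h_ae : dslope h 0 =ᵐ[volume] fun t => (1 - Real.exp (-w * t)) / t := by
    filter_upwards [compl_mem_ae_iff.mpr (measure_singleton (0 : ℝ))] with t ht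
    rw [dslope_of_ne h ht, slope_def_field]
    simp [h]
  exact (h_cont.intervalIntegrable a b).congr_ae (ae_restrict_of_ae h_ae)

theorem abs_integral_one_sub_exp_neg_mul_div_le {w x : ℝ} (hw : 0 ≤ w) (hx : 0 ≤ x) :
    |∫ t in (0 : ℝ)..x, (1 - Real.exp (-w * t)) / t| ≤ w * x := by
  have h_le : ∀ t ∈ Ι (0 : ℝ) x, ‖(1 - Real.exp (-w * t)) / t‖ ≤ w := by
    rintro t ⟨ht, -⟩
    rw [min_eq_left hx] at ht
    have h_lower : 0 ≤ 1 - Real.exp (-w * t) := by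
      rw [sub_nonneg, Real.exp_le_one_iff]; nlinarith
    have h_upper : 1 - Real.exp (-w * t) ≤ w * t := by linarith [Real.add_one_le_exp (-w * t)]
    rw [Real.norm_eq_abs, abs_div, abs_of_nonneg h_lower, abs_of_pos ht, div_le_iff₀ ht]
    exact h_upper
  simpa [abs_of_nonneg hx] using intervalIntegral.norm_integral_le_of_norm_le_const h_le

theorem tendsto_mellin_exp_neg_add_comp_inv_mul {s : ℂ} (hs : 0 < s.re) {g : ℝ → ℂ}
    (hg : Measurable g) {C : ℝ} (hgC : ∀ x, 0 < x → ‖g x‖ ≤ C * x) :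
    Tendsto (fun u : ℝ => mellin (fun y => Complex.exp (-y + g (u⁻¹ * y))) s) atTop
      (𝓝 (Complex.Gamma s)) := by
  rw [Complex.Gamma_eq_integral hs, Complex.GammaIntegral_eq_mellin]
  refine tendsto_integral_filter_of_dominated_convergence
    (fun y : ℝ => y ^ (s.re - 1) * Real.exp (-2⁻¹ * y ^ (1 : ℝ))) ?_ ?_ ?_ ?_
  · exact Eventually.of_forall fun u => by fun_prop
  · filter_upwards [eventually_gt_atTop 0, eventually_ge_atTop (2 * C)] with u hu hCu
    refine (ae_restrict_iff' measurableSet_Ioi).mpr <|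
      Eventually.of_forall fun y (hy : 0 < y) => ?_
    have h_exponent : (-(y : ℂ) + g (u⁻¹ * y)).re ≤ -2⁻¹ * y ^ (1 : ℝ) := by
      have h_g := (Complex.re_le_norm _).trans (hgC _ (mul_pos (inv_pos.mpr hu) hy))
      have h_Cu : C * (u⁻¹ * y) ≤ 2⁻¹ * y := by
        rw [← mul_assoc]
        gcongr
        rw [mul_inv_le_iff₀ hu]
        linarith
      simp only [Complex.add_re, Complex.neg_re, Complex.ofReal_re, Real.rpow_one]
      linarith
    rw [smul_eq_mul, norm_mul, Complex.norm_cpow_eq_rpow_re_of_pos hy, Complex.norm_exp,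
      Complex.sub_re, Complex.one_re]
    gcongr
  · exact integrableOn_rpow_mul_exp_neg_mul_rpow (by linarith) one_pos (by norm_num)
  · refine (ae_restrict_iff' measurableSet_Ioi).mpr (Eventually.of_forall fun y hy => ?_)
    have h_g : Tendsto (fun u : ℝ => g (u⁻¹ * y)) atTop (𝓝 0) := by
      refine squeeze_zero_norm' ?_ <| by
        simpa using (tendsto_inv_atTop_zero.mul_const y).const_mul C
      filter_upwards [eventually_gt_atTop 0] with u hu
      exact hgC _ (mul_pos (inv_pos.mpr hu) hy)
    have h_exponent := (tendsto_const_nhds (x := -(y : ℂ))).add h_g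
    rw [add_zero] at h_exponent
    simpa only [smul_eq_mul, Complex.ofReal_exp, Complex.ofReal_neg] using
      tendsto_const_nhds.mul h_exponent.cexp

theorem mellin_exp_neg_mul_add {g : ℝ → ℂ} (s : ℂ) {u : ℝ} (hu : 0 < u) :
    mellin (fun x : ℝ => Complex.exp (-((u * x : ℝ) : ℂ) + g x)) s =
      (u : ℂ) ^ (-s) * mellin (fun y => Complex.exp (-y + g (u⁻¹ * y))) s := by
  rw [← smul_eq_mul, ← mellin_comp_mul_left _ _ hu]
  simp only [inv_mul_cancel_left₀ hu.ne']

theorem nonneg_of_zero_of_le_succ {m : ℕ} {v : ℕ → ℝ} (hv0 : v 0 = 0)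
    (hv : ∀ i, i < m → v i ≤ v (i + 1)) {j : ℕ} (hj : j ≤ m) : 0 ≤ v j := by
  induction j with
  | zero => exact hv0.ge
  | succ i ih => exact (ih (by omega)).trans (hv i (by omega))

noncomputable def qstarExponent (m : ℕ) (v : ℕ → ℝ) (α : ℕ → ℂ) (x : ℝ) : ℂ :=
  ∑ j ∈ Finset.Icc 1 m, α j * ((∫ t in (0 : ℝ)..x, (1 - Real.exp (-(v j) * t)) / t : ℝ) : ℂ)

theorem integral_qstarIntegrand (m : ℕ) (v : ℕ → ℝ) (α : ℕ → ℂ) (u : ℝ) :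
    ∫ x in Ioi (0 : ℝ), qstarIntegrand m v α u x =
      mellin (fun x : ℝ => Complex.exp (-((u * x : ℝ) : ℂ) + qstarExponent m v α x))
        (-∑ j ∈ Finset.range (m + 1), α j) :=
  rfl

theorem continuous_qstarExponent (m : ℕ) (v : ℕ → ℝ) (α : ℕ → ℂ) :
    Continuous (qstarExponent m v α) :=
  continuous_finsetSum _ fun j _ => continuous_const.mul <| Complex.continuous_ofReal.comp <|
    intervalIntegral.continuous_primitive (intervalIntegrable_one_sub_exp_neg_mul_div (v j)) 0

theorem norm_qstarExponent_le {m : ℕ} {v : ℕ → ℝ} (α : ℕ → ℂ)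
    (hv : ∀ j ∈ Finset.Icc 1 m, 0 ≤ v j) {x : ℝ} (hx : 0 ≤ x) :
    ‖qstarExponent m v α x‖ ≤ (∑ j ∈ Finset.Icc 1 m, ‖α j‖ * v j) * x := by
  rw [Finset.sum_mul]
  refine (norm_sum_le _ _).trans (Finset.sum_le_sum fun j hj => ?_)
  rw [norm_mul, Complex.norm_real, Real.norm_eq_abs, mul_assoc]
  exact mul_le_mul_of_nonneg_left (abs_integral_one_sub_exp_neg_mul_div_le (hv j hj) hx)
    (norm_nonneg _)

theorem stmt1_general (m : ℕ) (v : ℕ → ℝ) (α : ℕ → ℂ)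
    (hv0 : v 0 = 0) (hv : ∀ i, i < m → v i < v (i + 1))
    (hβ : (∑ j ∈ Finset.range (m + 1), α j).re < 0) :
    Tendsto (fun u : ℝ => qstar m v α u / (u : ℂ) ^ (∑ j ∈ Finset.range (m + 1), α j))
      atTop (nhds 1) := by
  set β := ∑ j ∈ Finset.range (m + 1), α j
  have hs : 0 < (-β).re := by simpa using hβ
  have hv_nonneg : ∀ j ∈ Finset.Icc 1 m, 0 ≤ v j := fun j hj =>
    nonneg_of_zero_of_le_succ hv0 (fun i hi => (hv i hi).le) (Finset.mem_Icc.mp hj).2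
  have h_mellin := tendsto_mellin_exp_neg_add_comp_inv_mul hs
    (continuous_qstarExponent m v α).measurable
    fun x hx => norm_qstarExponent_le α hv_nonneg hx.le
  have h_Gamma : Complex.Gamma (-β) ≠ 0 := Complex.Gamma_ne_zero_of_re_pos hs
  rw [← inv_mul_cancel₀ h_Gamma]
  refine (h_mellin.const_mul _).congr' ?_
  filter_upwards [eventually_gt_atTop 0] with u hu
  have h_pow : (u : ℂ) ^ β ≠ 0 := by simp [hu.ne']
  rw [qstar, integral_qstarIntegrand, mellin_exp_neg_mul_add _ hu, neg_neg, mul_div_assoc,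
    mul_div_cancel_left₀ _ h_pow]

theorem stmt1 (m : ℕ) (v : ℕ → ℝ) (α : ℕ → ℂ)
    (hv0 : v 0 = 0) (hv : ∀ i, i < m → v i < v (i + 1))
    (hα : ∀ j, 1 ≤ j → j ≤ m → α j ≠ 0)
    (hβ : (∑ j ∈ Finset.range (m + 1), α j).re < 0) :
    Tendsto (fun u : ℝ => qstar m v α u / (u : ℂ) ^ (∑ j ∈ Finset.range (m + 1), α j))
      atTop (nhds 1) :=
  stmt1_general m v α hv0 hv hβ
end

section
/- Suppose q : ℝ → ℂ solves (E+), and suppose there is a complex number τ such that q(u)/u^τ → 1 as the real variable u → ∞ (u^τ the complex power of the positive real u). Then τ = β. -/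
/-!
With `f u = q u / u ^ τ`, (E+) gives `u • f' u = (∑ α_j q (u + v_j) - τ q u) / u ^ τ`.
Since `(u + v) ^ τ / u ^ τ → 1`, each `q (u + v_j) / u ^ τ` tends to `1`, so `u • f' u → β - τ`.
But `f` converges, and in the variable `t = log u` a convergent function whose derivative has
a nonzero limit is excluded by the mean value theorem.
-/

open Filter Topology

/-- `q : ℝ → ℂ` solves the advanced-argument equation (E+):
`q` is differentiable at every `u > 0` and
`u·q′(u) = ∑_{j=0}^m α_j q(u + v_j)` for all `u > 0`. -/
def SolvesEplus (m : ℕ) (v : ℕ → ℝ) (α : ℕ → ℂ) (q : ℝ → ℂ) : Prop :=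
  ∀ u : ℝ, 0 < u → DifferentiableAt ℝ q u ∧
    (u : ℂ) * deriv q u = ∑ j ∈ Finset.range (m + 1), α j * q (u + v j)

theorem eq_zero_of_tendsto_of_tendsto_deriv {E : Type*} [NormedAddCommGroup E] [NormedSpace ℝ E]
    {g g' : ℝ → E} {c l : E} (hd : ∀ᶠ t in atTop, HasDerivAt g (g' t) t)
    (hg' : Tendsto g' atTop (𝓝 c)) (hg : Tendsto g atTop (𝓝 l)) : c = 0 := by
  have h_zero : Tendsto (fun t => g (t + 1) - g t) atTop (𝓝 0) := by
    simpa using (hg.comp (tendsto_atTop_add_const_right _ 1 tendsto_id)).sub hg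
  -- mean value theorem for `t ↦ g t - t • c`, whose derivative is eventually small
  have h_c : Tendsto (fun t => g (t + 1) - g t) atTop (𝓝 c) := by
    refine Metric.tendsto_nhds.2 fun ε hε => ?_
    obtain ⟨T, hT⟩ := eventually_atTop.1
      (hd.and (hg'.eventually (Metric.closedBall_mem_nhds c (half_pos hε))))
    refine eventually_atTop.2 ⟨T, fun t ht => ?_⟩
    have hmvt := (convex_Ici T).norm_image_sub_le_of_norm_hasDerivWithin_le
      (f := fun s => g s - s • c) (f' := fun s => g' s - c)
      (fun s hs => (((hT s hs).1.sub ((hasDerivAt_id s).smul_const c)).congr_deriv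
        (by simp)).hasDerivWithinAt)
      (fun s hs => by simpa [dist_eq_norm] using (hT s hs).2) ht
      (le_add_of_le_of_nonneg ht zero_le_one)
    rw [dist_eq_norm]
    calc ‖g (t + 1) - g t - c‖ = ‖(g (t + 1) - (t + 1) • c) - (g t - t • c)‖ := by
          congr 1; rw [add_smul, one_smul]; abel
      _ ≤ ε / 2 * ‖t + 1 - t‖ := hmvt
      _ < ε := by rw [add_sub_cancel_left, norm_one, mul_one]; linarith
  exact tendsto_nhds_unique h_c h_zero

theorem eq_zero_of_tendsto_of_tendsto_smul_deriv {E : Type*} [NormedAddCommGroup E]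
    [NormedSpace ℝ E] {f f' : ℝ → E} {c l : E} (hd : ∀ᶠ u in atTop, HasDerivAt f (f' u) u)
    (hf' : Tendsto (fun u => u • f' u) atTop (𝓝 c)) (hf : Tendsto f atTop (𝓝 l)) : c = 0 :=
  eq_zero_of_tendsto_of_tendsto_deriv
    (Real.tendsto_exp_atTop.eventually hd |>.mono fun t ht => ht.scomp t (Real.hasDerivAt_exp t))
    (hf'.comp Real.tendsto_exp_atTop) (hf.comp Real.tendsto_exp_atTop)

theorem tendsto_ofReal_add_cpow_div_cpow (w : ℝ) (τ : ℂ) :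
    Tendsto (fun u : ℝ => ((u + w : ℝ) : ℂ) ^ τ / (u : ℂ) ^ τ) atTop (𝓝 1) := by
  have hratio : Tendsto (fun u : ℝ => 1 + w / u) atTop (𝓝 1) := by
    simpa using tendsto_const_nhds.add ((tendsto_const_nhds (x := w)).div_atTop tendsto_id)
  have hcont := Complex.continuousAt_ofReal_cpow_const 1 τ (Or.inr one_ne_zero)
  have := hcont.tendsto.comp hratio
  rw [Complex.ofReal_one, Complex.one_cpow] at this
  refine this.congr' ?_
  filter_upwards [eventually_gt_atTop (0 : ℝ), eventually_gt_atTop (-w)] with u hu huw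
  rw [Function.comp_apply, ← Complex.div_cpow_ofReal_nonneg (by linarith) hu.le,
    ← Complex.ofReal_div, add_div, div_self hu.ne']

theorem Filter.Tendsto.comp_add_div_ofReal_cpow {q : ℝ → ℂ} {τ L : ℂ}
    (hq : Tendsto (fun u => q u / (u : ℂ) ^ τ) atTop (𝓝 L)) (w : ℝ) :
    Tendsto (fun u => q (u + w) / (u : ℂ) ^ τ) atTop (𝓝 L) := by
  have := (hq.comp (tendsto_atTop_add_const_right _ w tendsto_id)).mul
    (tendsto_ofReal_add_cpow_div_cpow w τ)
  rw [mul_one] at this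
  refine this.congr' ?_
  filter_upwards [eventually_gt_atTop (-w)] with u hu
  exact div_mul_div_cancel₀
    (Complex.cpow_ne_zero_iff.2 (.inl (Complex.ofReal_ne_zero.2 (neg_lt_iff_pos_add.1 hu).ne')))

theorem HasDerivAt.div_ofReal_cpow {q : ℝ → ℂ} {q' : ℂ} {u : ℝ} (hq : HasDerivAt q q' u)
    (hu : 0 < u) (τ : ℂ) :
    HasDerivAt (fun x : ℝ => q x / (x : ℂ) ^ τ) ((q' - τ * q u / u) / (u : ℂ) ^ τ) u := by
  have hu' : (u : ℂ) ≠ 0 := Complex.ofReal_ne_zero.2 hu.ne'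
  have hpow : HasDerivAt (fun x : ℝ => (x : ℂ) ^ τ) (τ * (u : ℂ) ^ (τ - 1)) u :=
    (Complex.hasStrictDerivAt_cpow_const
      (Complex.ofReal_mem_slitPlane.2 hu)).hasDerivAt.comp_ofReal
  have hpow0 : (u : ℂ) ^ τ ≠ 0 := Complex.cpow_ne_zero_iff.2 (.inl hu')
  refine (hq.div hpow hpow0).congr_deriv ?_
  simp only [Complex.cpow_sub _ _ hu', Complex.cpow_one]
  field_simp

theorem stmt2_general (m : ℕ) (v : ℕ → ℝ) (α : ℕ → ℂ)
    (q : ℝ → ℂ) (hq : SolvesEplus m v α q) (τ : ℂ)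
    (hτ : Tendsto (fun u : ℝ => q u / (u : ℂ) ^ τ) atTop (nhds 1)) :
    τ = ∑ j ∈ Finset.range (m + 1), α j := by
  have hderiv : ∀ᶠ u in atTop, HasDerivAt (fun x : ℝ => q x / (x : ℂ) ^ τ)
      ((deriv q u - τ * q u / u) / (u : ℂ) ^ τ) u :=
    (eventually_gt_atTop 0).mono fun u hu => (hq u hu).1.hasDerivAt.div_ofReal_cpow hu τ
  have hlim : Tendsto (fun u : ℝ => u • ((deriv q u - τ * q u / u) / (u : ℂ) ^ τ)) atTop
      (𝓝 (∑ j ∈ Finset.range (m + 1), α j - τ)) := by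
    have hsum := tendsto_finsetSum (Finset.range (m + 1))
      fun j _ => (hτ.comp_add_div_ofReal_cpow (v j)).const_mul (α j)
    simp only [mul_one] at hsum
    refine (hsum.sub (by simpa using hτ.const_mul τ)).congr' ?_
    filter_upwards [eventually_gt_atTop 0] with u hu
    have hu' : (u : ℂ) ≠ 0 := Complex.ofReal_ne_zero.2 hu.ne'
    simp only [mul_div_assoc', ← Finset.sum_div, ← (hq u hu).2, Complex.real_smul]
    field_simp
  exact (sub_eq_zero.1 (eq_zero_of_tendsto_of_tendsto_smul_deriv hderiv hlim hτ)).symm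

theorem stmt2 (m : ℕ) (v : ℕ → ℝ) (α : ℕ → ℂ)
    (hv0 : v 0 = 0) (hv : ∀ i, i < m → v i < v (i + 1))
    (hα : ∀ j, 1 ≤ j → j ≤ m → α j ≠ 0)
    (q : ℝ → ℂ) (hq : SolvesEplus m v α q) (τ : ℂ)
    (hτ : Tendsto (fun u : ℝ => q u / (u : ℂ) ^ τ) atTop (nhds 1)) :
    τ = ∑ j ∈ Finset.range (m + 1), α j :=
  stmt2_general m v α q hq τ hτ
end

section
/- Suppose q_1 : ℝ → ℂ and q_2 : ℝ → ℂ both solve (E+), and suppose there are complex numbers τ_1, τ_2 such that q_i(u)/u^{τ_i} → 1 as the real variable u → ∞ for i = 1, 2. Then q_1(u) = q_2(u) for all u > 0. -/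
open MeasureTheory Filter Set

/-!
Both `τᵢ` equal `β = ∑ αⱼ`: for `h u = q u * u ^ (-τ)` the equation gives `u h'(u) → β - τ`,
which is compatible with `h → 1` only if `β = τ`. So `r = q₁ - q₂` solves (E+) with
`r u * u ^ (-β) → 0`. Because `β = ∑ αⱼ`, the derivative of `r u * u ^ (-β)` involves only the
differences `r (u + vⱼ) - r u`, and integrating it in from `+∞` turns a bound `r = O(u ^ c)` into
`r = O(u ^ (c - 1))`. Once `c < -∑ ‖αⱼ‖`, integrating `u r' = ∑ αⱼ r (u + vⱼ)` in from `+∞`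
shrinks the constant of the bound by the factor `∑ ‖αⱼ‖ / -c < 1`, so `r` vanishes near `+∞`.
Where all advanced terms vanish the equation reads `u r' = α₀ r`, so `r u * u ^ (-α₀)` is
constant; hence `r = 0` propagates down to `0` in steps of `v₁`.
-/

open Topology

lemma rpow_add_le_max_mul_rpow {c s t : ℝ} (ht : 0 < t) (hs : 0 ≤ s) (hst : s ≤ t) :
    (t + s) ^ c ≤ max 1 (2 ^ c) * t ^ c := by
  rcases le_or_gt 0 c with hc | hc
  · calc (t + s) ^ c ≤ (2 * t) ^ c := by gcongr; linarith
      _ = 2 ^ c * t ^ c := Real.mul_rpow zero_le_two ht.le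
      _ ≤ max 1 (2 ^ c) * t ^ c := by gcongr; exact le_max_right _ _
  · calc (t + s) ^ c ≤ t ^ c := Real.rpow_le_rpow_of_nonpos ht (by linarith) hc.le
      _ ≤ max 1 (2 ^ c) * t ^ c := le_mul_of_one_le_left (by positivity) (le_max_left _ _)

section MeanValue

variable {E : Type*} [NormedAddCommGroup E] [NormedSpace ℝ E] {f f' : ℝ → E}

lemma norm_sub_le_of_norm_deriv_le_rpow {D e t s : ℝ} (ht : 0 < t) (hs : 0 ≤ s) (hst : s ≤ t)
    (hD : 0 ≤ D) (hf : ∀ x ∈ Icc t (t + s), HasDerivAt f (f' x) x)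
    (hbd : ∀ x ∈ Icc t (t + s), ‖f' x‖ ≤ D * x ^ e) :
    ‖f (t + s) - f t‖ ≤ D * max 1 (2 ^ e) * t ^ e * s := by
  have hmvt := norm_image_sub_le_of_norm_deriv_le_segment' (C := D * max 1 (2 ^ e) * t ^ e)
    (fun x hx => (hf x hx).hasDerivWithinAt) (fun x hx => ?_) (t + s)
    (right_mem_Icc.2 (by linarith))
  · rwa [add_sub_cancel_left] at hmvt
  · have hx := Ico_subset_Icc_self hx
    calc ‖f' x‖ ≤ D * x ^ e := hbd x hx
      _ = D * (t + (x - t)) ^ e := by rw [add_sub_cancel]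
      _ ≤ D * (max 1 (2 ^ e) * t ^ e) := by
          gcongr; exact rpow_add_le_max_mul_rpow ht (by linarith [hx.1]) (by linarith [hx.2])
      _ = D * max 1 (2 ^ e) * t ^ e := (mul_assoc _ _ _).symm

lemma norm_le_of_tendsto_zero_of_norm_deriv_le {U M e : ℝ} (hU : 0 < U) (hM : 0 ≤ M) (he : e < 0)
    (hf : ∀ t, U ≤ t → HasDerivAt f (f' t) t) (hlim : Tendsto f atTop (𝓝 0))
    (hbd : ∀ t, U ≤ t → ‖f' t‖ ≤ M * t ^ (e - 1)) {u : ℝ} (hu : U ≤ u) :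
    ‖f u‖ ≤ M / -e * u ^ e := by
  have hu0 : 0 < u := hU.trans_le hu
  have hB (x : ℝ) (hx : 0 < x) :
      HasDerivAt (fun y => M / -e * (u ^ e - y ^ e)) (M * x ^ (e - 1)) x := by
    refine (((Real.hasDerivAt_rpow_const (p := e) (Or.inl hx.ne')).const_sub (u ^ e)).const_mul
      (M / -e)).congr_deriv ?_
    field_simp [he.ne]
  have hgap : ∀ T, u ≤ T → ‖f T - f u‖ ≤ M / -e * (u ^ e - T ^ e) := fun T hT =>
    image_norm_le_of_norm_deriv_right_le_deriv_boundary' (f' := f') (a := u) (b := T)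
      (fun x hx =>
        (hf x (hu.trans hx.1)).continuousAt.continuousWithinAt.sub continuousWithinAt_const)
      (fun x hx => ((hf x (hu.trans hx.1)).sub_const (f u)).hasDerivWithinAt)
      (by simp) (fun x hx => (hB x (hu0.trans_le hx.1)).continuousAt.continuousWithinAt)
      (fun x hx => (hB x (hu0.trans_le hx.1)).hasDerivWithinAt)
      (fun x hx => hbd x (hu.trans hx.1)) (right_mem_Icc.2 hT)
  have hdiv : 0 ≤ M / -e := div_nonneg hM (neg_nonneg.2 he.le)
  refine ge_of_tendsto (by simpa using hlim.norm.add_const (M / -e * u ^ e)) ?_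
  filter_upwards [eventually_ge_atTop u] with T hT
  calc ‖f u‖ ≤ ‖f T‖ + ‖f T - f u‖ := by
        simpa using norm_sub_le (f T) (f T - f u)
    _ ≤ ‖f T‖ + M / -e * u ^ e := by
        gcongr
        refine (hgap T hT).trans ?_
        gcongr
        linarith [Real.rpow_nonneg (hu0.trans_le hT).le e]

lemma eq_zero_of_tendsto_of_tendsto_smul_deriv_s3 {a L : E} (hf : Tendsto f atTop (𝓝 a))
    (hderiv : ∀ t, 0 < t → HasDerivAt f (f' t) t)
    (hL : Tendsto (fun t : ℝ => t • f' t) atTop (𝓝 L)) : L = 0 := by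
  -- `f - log • L` has derivative `t⁻¹ • (t • f' t - L) = o(1/t)`, so its increments over
  -- `[u, 2u]` tend to `0`; those of `f` do too, while those of `log • L` are `log 2 • L`.
  have hG (t : ℝ) (ht : 0 < t) : HasDerivAt (fun s => f s - Real.log s • L)
      (t⁻¹ • (t • f' t - L)) t := by
    refine ((hderiv t ht).sub ((Real.hasDerivAt_log ht.ne').smul_const L)).congr_deriv ?_
    rw [smul_sub, smul_smul, inv_mul_cancel₀ ht.ne', one_smul]
  have hincr : Tendsto (fun u : ℝ => (f (2 * u) - Real.log (2 * u) • L) - (f u - Real.log u • L))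
      atTop (𝓝 0) := by
    rw [Metric.tendsto_atTop]
    intro ε hε
    obtain ⟨N, hN⟩ := Metric.tendsto_atTop.1 hL (ε / 2) (half_pos hε)
    refine ⟨max N 1, fun u hu => ?_⟩
    have hu0 : 0 < u := lt_of_lt_of_le one_pos (le_of_max_le_right hu)
    have hmvt := norm_image_sub_le_of_norm_deriv_le_segment' (C := ε / 2 * u⁻¹)
      (fun x hx => (hG x (hu0.trans_le hx.1)).hasDerivWithinAt) (fun x hx => ?_) (2 * u)
      ⟨by linarith, le_rfl⟩
    · rw [dist_zero_right]
      calc _ ≤ ε / 2 * u⁻¹ * (2 * u - u) := hmvt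
        _ = ε / 2 := by field_simp; ring
        _ < ε := half_lt_self hε
    · have hx0 : 0 < x := hu0.trans_le hx.1
      rw [norm_smul, norm_inv, Real.norm_of_nonneg hx0.le, mul_comm]
      gcongr
      · rw [← dist_eq_norm]; exact (hN x ((le_of_max_le_left hu).trans hx.1)).le
      · exact hx.1
  have hlog : Tendsto (fun u : ℝ => (f (2 * u) - Real.log (2 * u) • L) - (f u - Real.log u • L))
      atTop (𝓝 (a - a - Real.log 2 • L)) := by
    refine ((hf.comp (tendsto_id.const_mul_atTop two_pos)).sub hf).sub_const (Real.log 2 • L)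
      |>.congr' ?_
    filter_upwards [eventually_gt_atTop 0] with u hu
    rw [Real.log_mul two_ne_zero hu.ne', add_smul]
    simp only [Function.comp_apply, id]
    abel
  have h := tendsto_nhds_unique hlog hincr
  rw [sub_self, zero_sub, neg_eq_zero, smul_eq_zero] at h
  exact h.resolve_left (Real.log_pos one_lt_two).ne'

end MeanValue

lemma norm_eq_norm_mul_cpow_neg_mul_rpow (z β : ℂ) {u : ℝ} (hu : 0 < u) :
    ‖z‖ = ‖z * (u : ℂ) ^ (-β)‖ * u ^ β.re := by
  rw [norm_mul, Complex.norm_cpow_eq_rpow_re_of_pos hu, mul_assoc, ← Real.rpow_add hu,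
    Complex.neg_re, neg_add_cancel, Real.rpow_zero, mul_one]

lemma tendsto_ofReal_add_cpow_mul_cpow_neg (w : ℝ) (τ : ℂ) :
    Tendsto (fun t : ℝ => ((t + w : ℝ) : ℂ) ^ τ * (t : ℂ) ^ (-τ)) atTop (𝓝 1) := by
  have hlim : Tendsto (fun t : ℝ => ((1 + w / t : ℝ) : ℂ) ^ τ) atTop (𝓝 1) := by
    have h1 : Tendsto (fun t : ℝ => 1 + w / t) atTop (𝓝 1) := by
      simpa using (tendsto_const_nhds (x := (1 : ℝ))).add
        ((tendsto_const_nhds (x := w)).div_atTop tendsto_id)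
    have hc := Complex.continuousAt_ofReal_cpow_const 1 τ (Or.inr one_ne_zero)
    simpa [Function.comp_def] using hc.tendsto.comp h1
  refine hlim.congr' ?_
  filter_upwards [eventually_gt_atTop 0, eventually_gt_atTop (-w)] with t ht htw
  have hsplit : t + w = (1 + w / t) * t := by field_simp
  have h1w : 0 ≤ 1 + w / t := by rw [one_add_div ht.ne']; exact div_nonneg (by linarith) ht.le
  rw [hsplit, Complex.ofReal_mul, Complex.mul_cpow_ofReal_nonneg h1w ht.le,
    mul_assoc, Complex.cpow_neg, mul_inv_cancel₀, mul_one]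
  exact Complex.cpow_ne_zero_iff.2 (Or.inl (Complex.ofReal_ne_zero.2 ht.ne'))

lemma exists_pos_le_of_lt_succ {m : ℕ} {v : ℕ → ℝ} (hv0 : v 0 = 0)
    (hv : ∀ i, i < m → v i < v (i + 1)) : ∃ δ > 0, ∀ j, 1 ≤ j → j ≤ m → δ ≤ v j := by
  rcases m with _ | k
  · exact ⟨1, one_pos, fun j h1 h0 => by omega⟩
  refine ⟨v 1, hv0 ▸ hv 0 k.succ_pos, fun j h1 => ?_⟩
  induction j, h1 using Nat.le_induction with
  | base => exact fun _ => le_rfl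
  | succ j _ ih => exact fun hj => (ih (by omega)).trans (hv j (by omega)).le

namespace SolvesEplus

variable {m : ℕ} {v : ℕ → ℝ} {α : ℕ → ℂ} {q : ℝ → ℂ}

protected lemma sub {q₁ q₂ : ℝ → ℂ} (h₁ : SolvesEplus m v α q₁) (h₂ : SolvesEplus m v α q₂) :
    SolvesEplus m v α (q₁ - q₂) := by
  intro u hu
  obtain ⟨d₁, e₁⟩ := h₁ u hu
  obtain ⟨d₂, e₂⟩ := h₂ u hu
  refine ⟨d₁.sub d₂, ?_⟩
  simp only [deriv_sub d₁ d₂, Pi.sub_apply, mul_sub, e₁, e₂, Finset.sum_sub_distrib]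

lemma hasDerivAt_mul_cpow (hq : SolvesEplus m v α q) {t : ℝ} (ht : 0 < t) (w : ℂ) :
    HasDerivAt (fun s : ℝ => q s * (s : ℂ) ^ w)
      ((t : ℂ) ^ (w - 1) * (∑ j ∈ Finset.range (m + 1), α j * q (t + v j) + w * q t)) t := by
  have hcpow : HasDerivAt (fun s : ℝ => (s : ℂ) ^ w) (w * (t : ℂ) ^ (w - 1)) t :=
    (Complex.hasStrictDerivAt_cpow_const (Complex.ofReal_mem_slitPlane.2 ht)).hasDerivAt.comp_ofReal
  refine ((hq t ht).1.hasDerivAt.mul hcpow).congr_deriv ?_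
  have ht0 : (t : ℂ) ≠ 0 := Complex.ofReal_ne_zero.2 ht.ne'
  rw [← (hq t ht).2, Complex.cpow_sub _ _ ht0, Complex.cpow_one]
  field_simp

lemma exponent_eq (hq : SolvesEplus m v α q) {τ : ℂ}
    (hτ : Tendsto (fun u : ℝ => q u / (u : ℂ) ^ τ) atTop (𝓝 1)) :
    τ = ∑ j ∈ Finset.range (m + 1), α j := by
  have hh : Tendsto (fun u : ℝ => q u * (u : ℂ) ^ (-τ)) atTop (𝓝 1) := by
    simpa only [Complex.cpow_neg, div_eq_mul_inv] using hτ
  have hshift (w : ℝ) : Tendsto (fun t : ℝ => q (t + w) * (t : ℂ) ^ (-τ)) atTop (𝓝 1) := by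
    have := (hh.comp (tendsto_atTop_add_const_right _ w tendsto_id)).mul
      (tendsto_ofReal_add_cpow_mul_cpow_neg w τ)
    rw [mul_one] at this
    refine this.congr' ?_
    filter_upwards [eventually_gt_atTop (-w)] with t ht
    have htw : ((t + w : ℝ) : ℂ) ≠ 0 := Complex.ofReal_ne_zero.2 (by linarith)
    rw [Function.comp_apply, id, mul_assoc, ← mul_assoc (((t + w : ℝ) : ℂ) ^ (-τ)),
      Complex.cpow_neg, inv_mul_cancel₀ (Complex.cpow_ne_zero_iff.2 (Or.inl htw)), one_mul]
  have hL : Tendsto (fun t : ℝ => t • ((t : ℂ) ^ (-τ - 1) *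
      (∑ j ∈ Finset.range (m + 1), α j * q (t + v j) + -τ * q t))) atTop
      (𝓝 (∑ j ∈ Finset.range (m + 1), α j - τ)) := by
    have := (tendsto_finsetSum (Finset.range (m + 1)) fun j _ => (hshift (v j)).const_mul (α j)).add
      (hh.const_mul (-τ))
    simp only [mul_one, ← sub_eq_add_neg] at this
    refine this.congr' ?_
    filter_upwards [eventually_gt_atTop 0] with t ht
    have ht0 : (t : ℂ) ≠ 0 := Complex.ofReal_ne_zero.2 ht.ne'
    rw [Complex.real_smul, Complex.cpow_sub _ _ ht0, Complex.cpow_one,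
      show ∀ a b : ℂ, (t : ℂ) * (a / t * b) = a * b from fun a b => by field_simp,
      mul_add, Finset.mul_sum]
    congr 1
    · exact Finset.sum_congr rfl fun j _ => by ring
    · ring
  exact (sub_eq_zero.1 (eq_zero_of_tendsto_of_tendsto_smul_deriv_s3 hh
    (fun t ht => hq.hasDerivAt_mul_cpow ht (-τ)) hL)).symm

lemma norm_deriv_le (hv : ∀ j ≤ m, 0 ≤ v j) (hq : SolvesEplus m v α q) {U K c : ℝ} (hU : 0 < U)
    (hUv : ∀ j ≤ m, v j ≤ U) (hK : 0 ≤ K) (hbd : ∀ t, U ≤ t → ‖q t‖ ≤ K * t ^ c)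
    {t : ℝ} (ht : U ≤ t) :
    ‖deriv q t‖ ≤ (∑ j ∈ Finset.range (m + 1), ‖α j‖) * max 1 (2 ^ c) * K * t ^ (c - 1) := by
  have ht0 : 0 < t := hU.trans_le ht
  have hsum : ‖∑ j ∈ Finset.range (m + 1), α j * q (t + v j)‖ ≤
      (∑ j ∈ Finset.range (m + 1), ‖α j‖) * max 1 (2 ^ c) * K * t ^ c := by
    simp only [Finset.sum_mul]
    refine (norm_sum_le _ _).trans (Finset.sum_le_sum fun j hj => ?_)
    have hj : j ≤ m := Nat.lt_succ_iff.1 (Finset.mem_range.1 hj)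
    rw [norm_mul, mul_assoc, mul_assoc]
    gcongr
    calc ‖q (t + v j)‖ ≤ K * (t + v j) ^ c := hbd _ (by linarith [hv j hj])
      _ ≤ K * (max 1 (2 ^ c) * t ^ c) := by
          gcongr; exact rpow_add_le_max_mul_rpow ht0 (hv j hj) ((hUv j hj).trans ht)
      _ = max 1 (2 ^ c) * (K * t ^ c) := by ring
  have hnorm : t * ‖deriv q t‖ = ‖∑ j ∈ Finset.range (m + 1), α j * q (t + v j)‖ := by
    rw [← (hq t ht0).2, norm_mul, Complex.norm_real, Real.norm_of_nonneg ht0.le]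
  rw [Real.rpow_sub_one ht0.ne', ← mul_div_assoc, le_div_iff₀ ht0, mul_comm, hnorm]
  exact hsum

lemma exists_norm_sum_sub_le (hv : ∀ j ≤ m, 0 ≤ v j) (hq : SolvesEplus m v α q) {U K c : ℝ}
    (hU : 0 < U) (hUv : ∀ j ≤ m, v j ≤ U) (hK : 0 ≤ K) (hbd : ∀ t, U ≤ t → ‖q t‖ ≤ K * t ^ c) :
    ∃ C, 0 ≤ C ∧ ∀ t, U ≤ t →
      ‖∑ j ∈ Finset.range (m + 1), α j * (q (t + v j) - q t)‖ ≤ C * t ^ (c - 1) := by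
  set A := ∑ j ∈ Finset.range (m + 1), ‖α j‖
  have hA : 0 ≤ A := Finset.sum_nonneg fun j _ => norm_nonneg _
  set D := A * max 1 (2 ^ c) * K
  have hD : 0 ≤ D := by positivity
  refine ⟨A * (D * max 1 (2 ^ (c - 1)) * U), by positivity, fun t ht => ?_⟩
  have ht0 : 0 < t := hU.trans_le ht
  have hdiff (j : ℕ) (hj : j ≤ m) :
      ‖q (t + v j) - q t‖ ≤ D * max 1 (2 ^ (c - 1)) * U * t ^ (c - 1) := by
    calc ‖q (t + v j) - q t‖ ≤ D * max 1 (2 ^ (c - 1)) * t ^ (c - 1) * v j :=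
          norm_sub_le_of_norm_deriv_le_rpow ht0 (hv j hj) ((hUv j hj).trans ht) hD
            (fun x hx => (hq x (ht0.trans_le hx.1)).1.hasDerivAt)
            (fun x hx => hq.norm_deriv_le hv hU hUv hK hbd (ht.trans hx.1))
      _ ≤ D * max 1 (2 ^ (c - 1)) * t ^ (c - 1) * U := by gcongr; exact hUv j hj
      _ = D * max 1 (2 ^ (c - 1)) * U * t ^ (c - 1) := by ring
  calc ‖∑ j ∈ Finset.range (m + 1), α j * (q (t + v j) - q t)‖
      ≤ ∑ j ∈ Finset.range (m + 1), ‖α j‖ * (D * max 1 (2 ^ (c - 1)) * U * t ^ (c - 1)) := by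
        refine (norm_sum_le _ _).trans (Finset.sum_le_sum fun j hj => ?_)
        rw [norm_mul]
        gcongr
        exact hdiff j (Nat.lt_succ_iff.1 (Finset.mem_range.1 hj))
    _ = A * (D * max 1 (2 ^ (c - 1)) * U) * t ^ (c - 1) := by rw [← Finset.sum_mul]; ring

lemma exists_norm_le_rpow_sub_one (hv : ∀ j ≤ m, 0 ≤ v j) (hq : SolvesEplus m v α q) {β : ℂ}
    (hβ : ∑ j ∈ Finset.range (m + 1), α j = β)
    (hg : Tendsto (fun t : ℝ => q t * (t : ℂ) ^ (-β)) atTop (𝓝 0)) {U K c : ℝ} (hU : 0 < U)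
    (hUv : ∀ j ≤ m, v j ≤ U) (hK : 0 ≤ K) (hc : c ≤ β.re) (hbd : ∀ t, U ≤ t → ‖q t‖ ≤ K * t ^ c) :
    ∃ K', 0 ≤ K' ∧ ∀ t, U ≤ t → ‖q t‖ ≤ K' * t ^ (c - 1) := by
  obtain ⟨C, hC, hsum⟩ := hq.exists_norm_sum_sub_le hv hU hUv hK hbd
  have hderiv (t : ℝ) (ht : U ≤ t) : HasDerivAt (fun s : ℝ => q s * (s : ℂ) ^ (-β))
      ((t : ℂ) ^ (-β - 1) * ∑ j ∈ Finset.range (m + 1), α j * (q (t + v j) - q t)) t := by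
    refine (hq.hasDerivAt_mul_cpow (hU.trans_le ht) (-β)).congr_deriv ?_
    rw [← hβ, neg_mul, Finset.sum_mul, ← sub_eq_add_neg, ← Finset.sum_sub_distrib]
    simp only [mul_sub]
  have hderiv_bd (t : ℝ) (ht : U ≤ t) :
      ‖(t : ℂ) ^ (-β - 1) * ∑ j ∈ Finset.range (m + 1), α j * (q (t + v j) - q t)‖ ≤
        C * t ^ (c - 1 - β.re - 1) := by
    have ht0 : 0 < t := hU.trans_le ht
    rw [norm_mul, Complex.norm_cpow_eq_rpow_re_of_pos ht0]
    calc t ^ (-β - 1).re * ‖∑ j ∈ Finset.range (m + 1), α j * (q (t + v j) - q t)‖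
        ≤ t ^ (-β - 1).re * (C * t ^ (c - 1)) := by gcongr; exact hsum t ht
      _ = C * t ^ (c - 1 - β.re - 1) := by
          rw [mul_left_comm, ← Real.rpow_add ht0]; congr 2; simp; ring
  have he : c - 1 - β.re < 0 := by linarith
  refine ⟨C / -(c - 1 - β.re), div_nonneg hC (by linarith), fun u hu => ?_⟩
  have hu0 : 0 < u := hU.trans_le hu
  have hgu := norm_le_of_tendsto_zero_of_norm_deriv_le hU hC he hderiv hg hderiv_bd hu
  calc ‖q u‖ = ‖q u * (u : ℂ) ^ (-β)‖ * u ^ β.re := norm_eq_norm_mul_cpow_neg_mul_rpow _ β hu0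
    _ ≤ C / -(c - 1 - β.re) * u ^ (c - 1 - β.re) * u ^ β.re := by gcongr
    _ = C / -(c - 1 - β.re) * u ^ (c - 1) := by
        rw [mul_assoc, ← Real.rpow_add hu0, sub_add_cancel]

lemma eq_zero_of_norm_le_rpow (hv : ∀ j ≤ m, 0 ≤ v j) (hq : SolvesEplus m v α q) {U K c : ℝ}
    (hU : 0 < U) (hUv : ∀ j ≤ m, v j ≤ U) (hK : 0 ≤ K)
    (hc : c < -∑ j ∈ Finset.range (m + 1), ‖α j‖) (hbd : ∀ t, U ≤ t → ‖q t‖ ≤ K * t ^ c)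
    {u : ℝ} (hu : U ≤ u) : q u = 0 := by
  set A := ∑ j ∈ Finset.range (m + 1), ‖α j‖
  have hA : 0 ≤ A := Finset.sum_nonneg fun j _ => norm_nonneg _
  have hc0 : c < 0 := by linarith
  have hmax : max 1 ((2 : ℝ) ^ c) = 1 :=
    max_eq_left (Real.rpow_le_one_of_one_le_of_nonpos one_le_two hc0.le)
  set ρ := A / -c
  have hρ0 : 0 ≤ ρ := div_nonneg hA (by linarith)
  have hρ1 : ρ < 1 := (div_lt_one (by linarith)).2 (by linarith)
  have hlim : Tendsto q atTop (𝓝 0) := by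
    refine squeeze_zero_norm' ((eventually_ge_atTop U).mono hbd) ?_
    simpa using (tendsto_rpow_neg_atTop (y := -c) (by linarith)).const_mul K
  have hiter (k : ℕ) : ∀ t, U ≤ t → ‖q t‖ ≤ K * ρ ^ k * t ^ c := by
    induction k with
    | zero => simpa using hbd
    | succ k ih =>
      intro t ht
      have hKρ : 0 ≤ K * ρ ^ k := by positivity
      calc ‖q t‖ ≤ A * max 1 (2 ^ c) * (K * ρ ^ k) / -c * t ^ c :=
            norm_le_of_tendsto_zero_of_norm_deriv_le hU (by positivity) hc0
              (fun s hs => (hq s (hU.trans_le hs)).1.hasDerivAt) hlim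
              (fun s hs => hq.norm_deriv_le hv hU hUv hKρ ih hs) ht
        _ = K * ρ ^ (k + 1) * t ^ c := by rw [hmax, pow_succ]; ring
  have hlim0 : Tendsto (fun k : ℕ => K * ρ ^ k * u ^ c) atTop (𝓝 0) := by
    simpa using ((tendsto_pow_atTop_nhds_zero_of_lt_one hρ0 hρ1).const_mul K).mul_const (u ^ c)
  exact norm_le_zero_iff.1 (ge_of_tendsto hlim0 (Eventually.of_forall fun k => hiter k u hu))

lemma exists_forall_ge_eq_zero (hv : ∀ j ≤ m, 0 ≤ v j) (hq : SolvesEplus m v α q) {β : ℂ}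
    (hβ : ∑ j ∈ Finset.range (m + 1), α j = β)
    (hg : Tendsto (fun t : ℝ => q t * (t : ℂ) ^ (-β)) atTop (𝓝 0)) :
    ∃ U, ∀ t, U ≤ t → q t = 0 := by
  obtain ⟨N, hN⟩ := Metric.tendsto_atTop.1 hg 1 one_pos
  set U := max N (max 1 (∑ j ∈ Finset.range (m + 1), v j))
  have hU : 0 < U := lt_max_of_lt_right (lt_max_of_lt_left one_pos)
  have hUv (j : ℕ) (hj : j ≤ m) : v j ≤ U :=
    (Finset.single_le_sum (fun i hi => hv i (Nat.lt_succ_iff.1 (Finset.mem_range.1 hi)))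
      (Finset.mem_range.2 (Nat.lt_succ_of_le hj))).trans (le_max_of_le_right (le_max_right _ _))
  have hbd (n : ℕ) : ∃ K, 0 ≤ K ∧ ∀ t, U ≤ t → ‖q t‖ ≤ K * t ^ (β.re - n) := by
    induction n with
    | zero =>
      refine ⟨1, zero_le_one, fun t ht => ?_⟩
      have ht0 : 0 < t := hU.trans_le ht
      have hgt : ‖q t * (t : ℂ) ^ (-β)‖ ≤ 1 := by
        rw [← dist_zero_right]; exact (hN t ((le_max_left _ _).trans ht)).le
      calc ‖q t‖ = ‖q t * (t : ℂ) ^ (-β)‖ * t ^ β.re := norm_eq_norm_mul_cpow_neg_mul_rpow _ β ht0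
        _ ≤ 1 * t ^ (β.re - (0 : ℕ)) := by simp only [CharP.cast_eq_zero, sub_zero]; gcongr
    | succ n ih =>
      obtain ⟨K, hK, hbd⟩ := ih
      have := hq.exists_norm_le_rpow_sub_one hv hβ hg hU hUv hK
        (by linarith [(n.cast_nonneg : (0 : ℝ) ≤ n)]) hbd
      simpa only [Nat.cast_succ, sub_add_eq_sub_sub] using this
  obtain ⟨n, hn⟩ := exists_nat_gt (β.re + ∑ j ∈ Finset.range (m + 1), ‖α j‖)
  obtain ⟨K, hK, hKbd⟩ := hbd n
  exact ⟨U, fun t ht => hq.eq_zero_of_norm_le_rpow hv hU hUv hK (by linarith) hKbd ht⟩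

lemma eq_zero_of_forall_ge_eq_zero (hv0 : v 0 = 0) {δ : ℝ} (hδ : 0 < δ)
    (hδv : ∀ j, 1 ≤ j → j ≤ m → δ ≤ v j) (hq : SolvesEplus m v α q) {U : ℝ}
    (hU : ∀ t, U ≤ t → q t = 0) {u : ℝ} (hu : 0 < u) : q u = 0 := by
  have hstep (W : ℝ) (hW : ∀ t, 0 < t → W ≤ t → q t = 0) (t : ℝ) (ht : 0 < t) (htW : W - δ ≤ t) :
      q t = 0 := by
    rcases le_or_gt W t with hWt | htW'
    · exact hW t ht hWt
    have hder (s : ℝ) (hs : s ∈ Ico t W) :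
        HasDerivWithinAt (fun s : ℝ => q s * (s : ℂ) ^ (-α 0)) 0 (Ici s) s := by
      refine ((hq.hasDerivAt_mul_cpow (ht.trans_le hs.1) (-α 0)).congr_deriv ?_).hasDerivWithinAt
      rw [Finset.sum_range_succ', Finset.sum_eq_zero fun i hi => ?_, hv0]
      · simp
      · have hvi : δ ≤ v (i + 1) := hδv (i + 1) (by omega) (Finset.mem_range.1 hi)
        rw [hW _ (by linarith [hs.1]) (by linarith [hs.1]), mul_zero]
    have hcont : ContinuousOn (fun s : ℝ => q s * (s : ℂ) ^ (-α 0)) (Icc t W) := fun s hs =>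
      (hq.hasDerivAt_mul_cpow (ht.trans_le hs.1) (-α 0)).continuousAt.continuousWithinAt
    have hconst := constant_of_has_deriv_right_zero hcont hder W ⟨htW'.le, le_rfl⟩
    rw [hW W (ht.trans htW') le_rfl, zero_mul, eq_comm] at hconst
    exact (mul_eq_zero.1 hconst).resolve_right
      (Complex.cpow_ne_zero_iff.2 (Or.inl (Complex.ofReal_ne_zero.2 ht.ne')))
  have hk (k : ℕ) : ∀ t, 0 < t → U - k * δ ≤ t → q t = 0 := by
    induction k with
    | zero => simpa using fun t _ => hU t
    | succ k ih => exact fun t ht htk => hstep _ ih t ht (by push_cast at htk; linarith)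
  obtain ⟨k, hk'⟩ := exists_nat_ge ((U - u) / δ)
  exact hk k u hu (by rw [div_le_iff₀ hδ] at hk'; linarith)

end SolvesEplus

theorem stmt3_general (m : ℕ) (v : ℕ → ℝ) (α : ℕ → ℂ)
    (hv0 : v 0 = 0) (hv : ∀ i, i < m → v i < v (i + 1))
    (q₁ q₂ : ℝ → ℂ) (hq₁ : SolvesEplus m v α q₁) (hq₂ : SolvesEplus m v α q₂)
    (τ₁ τ₂ : ℂ)
    (hτ₁ : Tendsto (fun u : ℝ => q₁ u / (u : ℂ) ^ τ₁) atTop (nhds 1))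
    (hτ₂ : Tendsto (fun u : ℝ => q₂ u / (u : ℂ) ^ τ₂) atTop (nhds 1)) :
    ∀ u : ℝ, 0 < u → q₁ u = q₂ u := by
  obtain ⟨δ, hδ, hδv⟩ := exists_pos_le_of_lt_succ hv0 hv
  have hv_nonneg (j : ℕ) (hj : j ≤ m) : 0 ≤ v j := by
    rcases Nat.eq_zero_or_pos j with rfl | hj0
    · exact hv0.ge
    · exact hδ.le.trans (hδv j hj0 hj)
  have hr := hq₁.sub hq₂
  obtain rfl : τ₂ = τ₁ := (hq₂.exponent_eq hτ₂).trans (hq₁.exponent_eq hτ₁).symm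
  have hg : Tendsto (fun t : ℝ => (q₁ - q₂) t * (t : ℂ) ^ (-τ₂)) atTop (𝓝 0) := by
    simpa only [Pi.sub_apply, sub_mul, Complex.cpow_neg, div_eq_mul_inv, sub_self]
      using hτ₁.sub hτ₂
  obtain ⟨U, hU⟩ := hr.exists_forall_ge_eq_zero hv_nonneg (hq₁.exponent_eq hτ₁).symm hg
  exact fun u hu => sub_eq_zero.1 (hr.eq_zero_of_forall_ge_eq_zero hv0 hδ hδv hU hu)

theorem stmt3 (m : ℕ) (v : ℕ → ℝ) (α : ℕ → ℂ)
    (hv0 : v 0 = 0) (hv : ∀ i, i < m → v i < v (i + 1))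
    (hα : ∀ j, 1 ≤ j → j ≤ m → α j ≠ 0)
    (q₁ q₂ : ℝ → ℂ) (hq₁ : SolvesEplus m v α q₁) (hq₂ : SolvesEplus m v α q₂)
    (τ₁ τ₂ : ℂ)
    (hτ₁ : Tendsto (fun u : ℝ => q₁ u / (u : ℂ) ^ τ₁) atTop (nhds 1))
    (hτ₂ : Tendsto (fun u : ℝ => q₂ u / (u : ℂ) ^ τ₂) atTop (nhds 1)) :
    ∀ u : ℝ, 0 < u → q₁ u = q₂ u :=
  stmt3_general m v α hv0 hv q₁ q₂ hq₁ hq₂ τ₁ τ₂ hτ₁ hτ₂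
end

section
/- Suppose q : ℝ → ℂ solves (E+), and suppose there exist a real number r and constants B, u_0 > 0 such that |q(u)| ≤ B·u^r for all u ≥ u_0. Then there exists a complex number A such that q(u)·u^{−β} → A as the real variable u → ∞ (u^{−β} the complex power of the positive real u). -/
/-!
Put `β = ∑ α_j` and `g(u) = q(u) u^{-β}`. By the equation,
`g'(u) = u^{-β-1} ∑ α_j (q(u + v_j) - q(u))`. If `q = O(u^s)`, the equation gives
`q' = O(u^{s-1})`, so by the mean value theorem each difference `q(u + v_j) - q(u)` is
`O(u^{s-1})` and `g' = O(u^{s - Re β - 2})`. When `s > Re β + 1` this integrates to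
`g = O(u^{s - Re β - 1})`, i.e. `q = O(u^{s-1})`. Finitely many such steps bring the exponent
down to `Re β + 1/2`, where `g' = O(u^{-3/2})` is integrable at infinity, so `g` converges.
-/

open MeasureTheory Filter Set

open Asymptotics Topology

lemma rpow_le_two_rpow_abs_mul_rpow {t u : ℝ} (s : ℝ) (hu : 0 < u)
    (ht : t ∈ Icc (u / 2) (2 * u)) : t ^ s ≤ 2 ^ |s| * u ^ s := by
  have hratio : t ^ s = (t / u) ^ s * u ^ s := by
    rw [← Real.mul_rpow (div_nonneg ((half_pos hu).le.trans ht.1) hu.le) hu.le,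
      div_mul_cancel₀ _ hu.ne']
  have hlo : 1 / 2 ≤ t / u := by rw [le_div_iff₀ hu]; linarith [ht.1]
  have hhi : t / u ≤ 2 := by rw [div_le_iff₀ hu]; linarith [ht.2]
  rw [hratio]
  gcongr
  rcases le_or_gt 0 s with hs | hs
  · calc (t / u) ^ s ≤ 2 ^ s := Real.rpow_le_rpow (by linarith) hhi hs
      _ = 2 ^ |s| := by rw [abs_of_nonneg hs]
  · calc (t / u) ^ s ≤ (1 / 2) ^ s := Real.rpow_le_rpow_of_nonpos (by norm_num) hlo hs.le
      _ = 2 ^ |s| := by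
        rw [abs_of_neg hs, Real.rpow_neg zero_le_two, one_div, Real.inv_rpow zero_le_two]

lemma isBigO_rpow_rpow_atTop_of_le {a b : ℝ} (hab : a ≤ b) :
    (fun t : ℝ => t ^ a) =O[atTop] fun t => t ^ b := by
  refine Eventually.isBigO ?_
  filter_upwards [eventually_ge_atTop 1] with t ht
  rw [Real.norm_of_nonneg (Real.rpow_nonneg (zero_le_one.trans ht) a)]
  exact Real.rpow_le_rpow_of_exponent_le ht hab

lemma isBigO_ofReal_cpow_atTop (z : ℂ) :
    (fun t : ℝ => (t : ℂ) ^ z) =O[atTop] fun t => t ^ z.re := by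
  refine Eventually.isBigO ?_
  filter_upwards [eventually_gt_atTop 0] with t ht
  rw [Complex.norm_cpow_eq_rpow_re_of_pos ht]

section Growth

variable {E : Type*} [NormedAddCommGroup E] {f : ℝ → E} {s : ℝ}

lemma Asymptotics.IsBigO.exists_bound_Icc_half_two (hf : f =O[atTop] fun t => t ^ s) :
    ∃ K, ∀ᶠ u in atTop, ∀ t ∈ Icc (u / 2) (2 * u), ‖f t‖ ≤ K * u ^ s := by
  obtain ⟨C, hC, hCf⟩ := hf.exists_pos
  obtain ⟨T, hT⟩ := eventually_atTop.1 hCf.bound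
  refine ⟨C * 2 ^ |s|, ?_⟩
  filter_upwards [eventually_ge_atTop (2 * T), eventually_gt_atTop 0] with u huT hu t ht
  have ht0 : 0 < t := (half_pos hu).trans_le ht.1
  calc ‖f t‖ ≤ C * ‖t ^ s‖ := hT t (by linarith [ht.1])
    _ = C * t ^ s := by rw [Real.norm_of_nonneg (Real.rpow_nonneg ht0.le s)]
    _ ≤ C * (2 ^ |s| * u ^ s) := by gcongr; exact rpow_le_two_rpow_abs_mul_rpow s hu ht
    _ = C * 2 ^ |s| * u ^ s := by ring

lemma add_mem_Icc_half_two {u c : ℝ} (hc : 2 * |c| ≤ u) : u + c ∈ Icc (u / 2) (2 * u) := by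
  constructor <;> linarith [neg_abs_le c, le_abs_self c]

lemma Asymptotics.IsBigO.comp_add_const_atTop (hf : f =O[atTop] fun t => t ^ s) (c : ℝ) :
    (fun u => f (u + c)) =O[atTop] fun t => t ^ s := by
  obtain ⟨K, hK⟩ := hf.exists_bound_Icc_half_two
  refine IsBigO.of_bound K ?_
  filter_upwards [hK, eventually_ge_atTop (2 * |c|)] with u hu hcu
  rw [Real.norm_of_nonneg (Real.rpow_nonneg (by linarith [abs_nonneg c]) s)]
  exact hu _ (add_mem_Icc_half_two hcu)

lemma Asymptotics.IsBigO.exists_rpow_bound (hf : f =O[atTop] fun t => t ^ s) :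
    ∃ K a, 1 ≤ a ∧ ∀ t, a ≤ t → ‖f t‖ ≤ K * t ^ s := by
  obtain ⟨K, hK⟩ := hf.bound
  obtain ⟨T, hT⟩ := eventually_atTop.1 hK
  refine ⟨K, max T 1, le_max_right T 1, fun t ht => ?_⟩
  have ht1 : 1 ≤ t := (le_max_right T 1).trans ht
  rw [← Real.norm_of_nonneg (Real.rpow_nonneg (zero_le_one.trans ht1) s)]
  exact hT t ((le_max_left T 1).trans ht)

variable [NormedSpace ℝ E]

lemma isBigO_sub_comp_add_const_of_isBigO_deriv (hf : ∀ t, 0 < t → DifferentiableAt ℝ f t)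
    (hf' : deriv f =O[atTop] fun t => t ^ s) (c : ℝ) :
    (fun u => f (u + c) - f u) =O[atTop] fun t => t ^ s := by
  obtain ⟨K, hK⟩ := hf'.exists_bound_Icc_half_two
  refine IsBigO.of_bound (K * |c|) ?_
  filter_upwards [hK, eventually_ge_atTop (2 * |c|), eventually_gt_atTop 0]
    with u hu hcu hu0
  have hmvt := (convex_Icc (u / 2) (2 * u)).norm_image_sub_le_of_norm_deriv_le (x := u)
    (fun t ht => hf t ((half_pos hu0).trans_le ht.1)) hu
    ⟨by linarith, by linarith⟩ (add_mem_Icc_half_two hcu)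
  rw [add_sub_cancel_left, Real.norm_eq_abs] at hmvt
  rw [Real.norm_of_nonneg (Real.rpow_nonneg hu0.le s)]
  linarith

lemma norm_sub_le_of_norm_deriv_le_rpow_s4 {a x e K : ℝ} (ha : 0 < a) (hax : a ≤ x) (he : e ≠ -1)
    (hf : ∀ t, a ≤ t → DifferentiableAt ℝ f t) (hf' : ∀ t, a ≤ t → ‖deriv f t‖ ≤ K * t ^ e) :
    ‖f x - f a‖ ≤ K / (e + 1) * (x ^ (e + 1) - a ^ (e + 1)) := by
  have he1 : e + 1 ≠ 0 := fun h => he (by linarith)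
  have hB : ∀ t ∈ Icc a x, HasDerivAt (fun t => K / (e + 1) * (t ^ (e + 1) - a ^ (e + 1)))
      (K * t ^ e) t := by
    intro t ht
    have h := ((Real.hasDerivAt_rpow_const (p := e + 1) (Or.inl (ha.trans_le ht.1).ne')).sub_const
      (a ^ (e + 1))).const_mul (K / (e + 1))
    rwa [add_sub_cancel_right, ← mul_assoc, div_mul_cancel₀ _ he1] at h
  exact image_norm_le_of_norm_deriv_right_le_deriv_boundary' (f := fun t => f t - f a)
    (fun t ht => ((hf t ht.1).continuousAt.sub continuousAt_const).continuousWithinAt)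
    (fun t ht => ((hf t ht.1).hasDerivAt.sub_const (f a)).hasDerivWithinAt)
    (by simp) (fun t ht => (hB t ht).continuousAt.continuousWithinAt)
    (fun t ht => (hB t (Ico_subset_Icc_self ht)).hasDerivWithinAt) (fun t ht => hf' t ht.1)
    ⟨hax, le_rfl⟩

lemma isBigO_rpow_add_one_of_isBigO_deriv {e : ℝ} (hf : ∀ t, 0 < t → DifferentiableAt ℝ f t)
    (he : -1 < e) (hf' : deriv f =O[atTop] fun t => t ^ e) :
    f =O[atTop] fun t => t ^ (e + 1) := by
  obtain ⟨K, a, ha, hK⟩ := hf'.exists_rpow_bound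
  have he1 : 0 < e + 1 := by linarith
  refine IsBigO.of_bound (‖f a‖ + K / (e + 1)) ?_
  filter_upwards [eventually_ge_atTop a] with x hax
  have hx0 : 0 ≤ x := by linarith
  have hxe : 1 ≤ x ^ (e + 1) := Real.one_le_rpow (ha.trans hax) he1.le
  have hsub := norm_sub_le_of_norm_deriv_le_rpow_s4 (zero_lt_one.trans_le ha) hax he.ne'
    (fun t hat => hf t (by linarith)) hK
  have hK0 : 0 ≤ K := by
    have h := (norm_nonneg _).trans (hK a le_rfl)
    exact nonneg_of_mul_nonneg_left h (Real.rpow_pos_of_pos (by linarith) e)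
  rw [Real.norm_of_nonneg (Real.rpow_nonneg hx0 _)]
  calc ‖f x‖ ≤ ‖f a‖ + ‖f x - f a‖ := norm_le_norm_add_norm_sub' _ _
    _ ≤ ‖f a‖ * x ^ (e + 1) + K / (e + 1) * x ^ (e + 1) := by
        gcongr
        · exact le_mul_of_one_le_right (norm_nonneg _) hxe
        · refine hsub.trans (mul_le_mul_of_nonneg_left ?_ (by positivity))
          linarith [Real.rpow_nonneg (zero_le_one.trans ha) (e + 1)]
    _ = (‖f a‖ + K / (e + 1)) * x ^ (e + 1) := by ring

lemma exists_tendsto_of_isBigO_deriv [CompleteSpace E] {e : ℝ}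
    (hf : ∀ t, 0 < t → DifferentiableAt ℝ f t) (he : e < -1)
    (hf' : deriv f =O[atTop] fun t => t ^ e) : ∃ A, Tendsto f atTop (𝓝 A) := by
  obtain ⟨K, a, ha, hK⟩ := hf'.exists_rpow_bound
  have ha0 : 0 < a := zero_lt_one.trans_le ha
  have hint : IntegrableOn (deriv f) (Ioi a) :=
    ((integrableOn_Ioi_rpow_of_lt he ha0).const_mul K).mono' (aestronglyMeasurable_deriv f _)
      ((ae_restrict_iff' measurableSet_Ioi).2 (ae_of_all _ fun t ht => hK t (le_of_lt ht)))
  exact ⟨_, tendsto_limUnder_of_hasDerivAt_of_integrableOn_Ioi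
    (fun t ht => (hf t (ha0.trans ht)).hasDerivAt) hint⟩

end Growth

lemma hasDerivAt_mul_ofReal_cpow_neg {f : ℝ → ℂ} {f' : ℂ} {u : ℝ} (hu : 0 < u)
    (hf : HasDerivAt f f' u) (β : ℂ) :
    HasDerivAt (fun x : ℝ => f x * (x : ℂ) ^ (-β)) ((u : ℂ) ^ (-β - 1) * (u * f' - β * f u)) u := by
  have hpow : HasDerivAt (fun x : ℝ => (x : ℂ) ^ (-β)) (-β * (u : ℂ) ^ (-β - 1)) u :=
    (Complex.hasStrictDerivAt_cpow_const (Complex.ofReal_mem_slitPlane.2 hu)).hasDerivAt.comp_ofReal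
  have hsplit : (u : ℂ) ^ (-β) = u * (u : ℂ) ^ (-β - 1) := by
    conv_lhs => rw [show -β = 1 + (-β - 1) by ring]
    rw [Complex.cpow_add _ _ (Complex.ofReal_ne_zero.2 hu.ne'), Complex.cpow_one]
  refine (hf.mul hpow).congr_deriv ?_
  rw [hsplit]
  ring

namespace SolvesEplus

variable {m : ℕ} {v : ℕ → ℝ} {α : ℕ → ℂ} {q : ℝ → ℂ} {s : ℝ}

lemma deriv_eq (hq : SolvesEplus m v α q) {u : ℝ} (hu : 0 < u) :
    deriv q u = (u : ℂ) ^ (-1 : ℂ) * ∑ j ∈ Finset.range (m + 1), α j * q (u + v j) := by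
  rw [← (hq u hu).2, Complex.cpow_neg_one, inv_mul_cancel_left₀ (Complex.ofReal_ne_zero.2 hu.ne')]

lemma isBigO_deriv (hq : SolvesEplus m v α q) (h : q =O[atTop] fun t => t ^ s) :
    deriv q =O[atTop] fun t => t ^ (s - 1) := by
  have hsum : (fun u => ∑ j ∈ Finset.range (m + 1), α j * q (u + v j)) =O[atTop]
      fun t => t ^ s :=
    IsBigO.fun_sum fun j _ => (h.comp_add_const_atTop (v j)).const_mul_left (α j)
  refine IsBigO.congr' ((isBigO_ofReal_cpow_atTop (-1)).mul_atTop_rpow_of_isBigO_rpow _ _ _ hsum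
    (by norm_num)) ?_ EventuallyEq.rfl
  filter_upwards [eventually_gt_atTop 0] with u hu
  exact (hq.deriv_eq hu).symm

lemma hasDerivAt_mul_cpow_neg (hq : SolvesEplus m v α q) {u : ℝ} (hu : 0 < u) :
    HasDerivAt (fun x : ℝ => q x * (x : ℂ) ^ (-∑ j ∈ Finset.range (m + 1), α j))
      ((u : ℂ) ^ (-∑ j ∈ Finset.range (m + 1), α j - 1) *
        ∑ j ∈ Finset.range (m + 1), α j * (q (u + v j) - q u)) u := by
  convert hasDerivAt_mul_ofReal_cpow_neg hu (hq u hu).1.hasDerivAt _ using 2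
  simp only [mul_sub, Finset.sum_sub_distrib, (hq u hu).2, Finset.sum_mul]

lemma isBigO_deriv_mul_cpow_neg (hq : SolvesEplus m v α q) (h : q =O[atTop] fun t => t ^ s) :
    deriv (fun x : ℝ => q x * (x : ℂ) ^ (-∑ j ∈ Finset.range (m + 1), α j)) =O[atTop]
      fun t => t ^ (s - (∑ j ∈ Finset.range (m + 1), α j).re - 2) := by
  have hq' : ∀ t, 0 < t → DifferentiableAt ℝ q t := fun t ht => (hq t ht).1
  have hsum : (fun u => ∑ j ∈ Finset.range (m + 1), α j * (q (u + v j) - q u)) =O[atTop]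
      fun t => t ^ (s - 1) :=
    IsBigO.fun_sum fun j _ =>
      (isBigO_sub_comp_add_const_of_isBigO_deriv hq' (hq.isBigO_deriv h) (v j)).const_mul_left _
  refine IsBigO.congr' ((isBigO_ofReal_cpow_atTop
    (-∑ j ∈ Finset.range (m + 1), α j - 1)).mul_atTop_rpow_of_isBigO_rpow _ _ _ hsum
    (by simp only [Complex.sub_re, Complex.neg_re, Complex.one_re]; linarith)) ?_
    EventuallyEq.rfl
  filter_upwards [eventually_gt_atTop 0] with u hu
  exact (hq.hasDerivAt_mul_cpow_neg hu).deriv.symm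

lemma isBigO_rpow_sub_one (hq : SolvesEplus m v α q)
    (hs : (∑ j ∈ Finset.range (m + 1), α j).re + 1 < s) (h : q =O[atTop] fun t => t ^ s) :
    q =O[atTop] fun t => t ^ (s - 1) := by
  set β := ∑ j ∈ Finset.range (m + 1), α j
  have hg : (fun x : ℝ => q x * (x : ℂ) ^ (-β)) =O[atTop] fun t => t ^ (s - β.re - 2 + 1) :=
    isBigO_rpow_add_one_of_isBigO_deriv
      (fun t ht => (hq.hasDerivAt_mul_cpow_neg ht).differentiableAt) (by linarith)
      (hq.isBigO_deriv_mul_cpow_neg h)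
  refine (hg.mul_atTop_rpow_of_isBigO_rpow _ _ _ (isBigO_ofReal_cpow_atTop β)
    (by linarith)).congr' ?_ EventuallyEq.rfl
  filter_upwards [eventually_gt_atTop 0] with u hu
  rw [Pi.mul_apply, mul_assoc, ← Complex.cpow_add _ _ (Complex.ofReal_ne_zero.2 hu.ne'),
    neg_add_cancel, Complex.cpow_zero, mul_one]

lemma isBigO_rpow_re_add_half (hq : SolvesEplus m v α q) {r : ℝ}
    (h : q =O[atTop] fun t => t ^ r) :
    q =O[atTop] fun t => t ^ ((∑ j ∈ Finset.range (m + 1), α j).re + 1 / 2) := by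
  set c := (∑ j ∈ Finset.range (m + 1), α j).re + 1 / 2 with hc
  have hdescent : ∀ n : ℕ, (q =O[atTop] fun t => t ^ (c + n)) → q =O[atTop] fun t => t ^ c := by
    intro n
    induction n with
    | zero => simp
    | succ n ih =>
      intro hn
      have h' := hq.isBigO_rpow_sub_one (by push_cast; linarith [n.cast_nonneg (α := ℝ)]) hn
      exact ih (by rwa [show c + ↑(n + 1) - 1 = c + n by push_cast; ring] at h')
  exact hdescent ⌈r - c⌉₊
    (h.trans (isBigO_rpow_rpow_atTop_of_le (by linarith [Nat.le_ceil (r - c)])))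

end SolvesEplus

theorem stmt4_general (m : ℕ) (v : ℕ → ℝ) (α : ℕ → ℂ)
    (q : ℝ → ℂ) (hq : SolvesEplus m v α q)
    (r : ℝ) (B u₀ : ℝ)
    (hbound : ∀ u : ℝ, u₀ ≤ u → ‖q u‖ ≤ B * u ^ r) :
    ∃ A : ℂ, Tendsto (fun u : ℝ => q u * (u : ℂ) ^ (-(∑ j ∈ Finset.range (m + 1), α j)))
      atTop (nhds A) := by
  have hr : q =O[atTop] fun t => t ^ r := by
    refine IsBigO.of_bound B ?_
    filter_upwards [eventually_ge_atTop u₀, eventually_ge_atTop 0] with u hu hu0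
    rw [Real.norm_of_nonneg (Real.rpow_nonneg hu0 r)]
    exact hbound u hu
  refine exists_tendsto_of_isBigO_deriv
    (fun t ht => (hq.hasDerivAt_mul_cpow_neg ht).differentiableAt) ?_
    (hq.isBigO_deriv_mul_cpow_neg (hq.isBigO_rpow_re_add_half hr))
  linarith

theorem stmt4 (m : ℕ) (v : ℕ → ℝ) (α : ℕ → ℂ)
    (hv0 : v 0 = 0) (hv : ∀ i, i < m → v i < v (i + 1))
    (hα : ∀ j, 1 ≤ j → j ≤ m → α j ≠ 0)
    (q : ℝ → ℂ) (hq : SolvesEplus m v α q)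
    (r : ℝ) (B u₀ : ℝ) (hB : 0 < B) (hu₀ : 0 < u₀)
    (hbound : ∀ u : ℝ, u₀ ≤ u → ‖q u‖ ≤ B * u ^ r) :
    ∃ A : ℂ, Tendsto (fun u : ℝ => q u * (u : ℂ) ^ (-(∑ j ∈ Finset.range (m + 1), α j)))
      atTop (nhds A) :=
  stmt4_general m v α q hq r B u₀ hbound
end

section
/- Suppose q_1 : ℝ → ℂ and q_2 : ℝ → ℂ both solve (E+), and suppose each is polynomially bounded: for i = 1, 2 there exist a real number r_i and constants B_i, u_i > 0 with |q_i(u)| ≤ B_i·u^{r_i} for all u ≥ u_i. Then q_1 and q_2 are linearly dependent over ℂ on (0,∞): there exist complex numbers c_1, c_2, not both zero, such that c_1 q_1(u) + c_2 q_2(u) = 0 for all u > 0. -/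
/-
With `β = ∑ α_j`, the function `g(u) = u^(-β) q(u)` satisfies
`u g'(u) = ∑ α_j (((u + v_j) / u)^β g(u + v_j) - g(u))`, and `((u + v_j) / u)^β = 1 + O(1/u)`.
So a bound `‖g‖ ≤ K u^x` on `[U, ∞)` first gives `g' = O(u^(x-1))`, hence
`g(u + v_j) - g(u) = O(u^(x-1))`, hence `‖g'‖ ≤ C K u^(x-2)`. Integrating lowers the exponent of a
polynomial bound by one at a time until `g'` is integrable at infinity, so every polynomially
bounded solution has `g(u) → L`. For two solutions with limits `L₁ ≠ 0` and `L₂`, the combination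
`L₂ q₁ - L₁ q₂` has `g → 0`; integrating from infinity now gives `‖g‖ ≤ C K u^(x-1)` with `C`
independent of `x ≤ 0`, so `‖g(u)‖ ≤ (C/u)^n` for every `n` and `g` vanishes beyond `C`. Where `q`
vanishes on `(s, ∞)` the equation reduces to `u q' = α₀ q` on `(s - v₁, ∞)`, so the zero propagates
down to all of `(0, ∞)`. If `L₁ = 0`, this argument applies to `q₁` alone.
-/

open MeasureTheory Filter Set

open Topology

theorem Real.rpow_le_one_add_rpow_mul {u t V : ℝ} (x : ℝ) (hu : 1 ≤ u) (hut : u ≤ t)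
    (htu : t ≤ u + V) : t ^ x ≤ (1 + V) ^ max x 0 * u ^ x := by
  have hu0 : 0 < u := by linarith
  rcases le_or_gt 0 x with hx | hx
  · rw [max_eq_left hx, ← Real.mul_rpow (by linarith) hu0.le]
    exact Real.rpow_le_rpow (by linarith) (by nlinarith) hx
  · rw [max_eq_right hx.le, Real.rpow_zero, one_mul]
    exact Real.rpow_le_rpow_of_nonpos hu0 hut hx.le

theorem nonneg_of_forall_norm_le_mul_rpow {E : Type*} [SeminormedAddCommGroup E] {f : ℝ → E}
    {U K x : ℝ} (hU : 0 < U) (hf : ∀ t, U ≤ t → ‖f t‖ ≤ K * t ^ x) : 0 ≤ K :=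
  nonneg_of_mul_nonneg_left ((norm_nonneg _).trans (hf U le_rfl)) (Real.rpow_pos_of_pos hU x)

theorem norm_add_le_of_forall_norm_le_mul_rpow {E : Type*} [SeminormedAddCommGroup E]
    {f : ℝ → E} {U K x V u w : ℝ} (hU : 1 ≤ U) (hf : ∀ t, U ≤ t → ‖f t‖ ≤ K * t ^ x)
    (hu : U ≤ u) (hw : w ∈ Icc 0 V) : ‖f (u + w)‖ ≤ K * ((1 + V) ^ max x 0 * u ^ x) :=
  (hf _ (by linarith [hw.1])).trans <| mul_le_mul_of_nonneg_left
    (Real.rpow_le_one_add_rpow_mul x (hU.trans hu) (by linarith [hw.1]) (by linarith [hw.2]))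
    (nonneg_of_forall_norm_le_mul_rpow (by linarith) hf)

section DerivBounds

variable {E : Type*} [NormedAddCommGroup E] [NormedSpace ℝ E] {g g' : ℝ → E}

theorem norm_sub_le_of_norm_deriv_le_rpow_s5 {a b C w : ℝ} (ha : 0 < a) (hab : a ≤ b)
    (hw : w + 1 ≠ 0) (hg : ∀ t ∈ Icc a b, HasDerivAt g (g' t) t)
    (hbd : ∀ t ∈ Icc a b, ‖g' t‖ ≤ C * t ^ w) :
    ‖g b - g a‖ ≤ C / (w + 1) * (b ^ (w + 1) - a ^ (w + 1)) := by
  have hB : ∀ t ∈ Icc a b,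
      HasDerivAt (fun s => C / (w + 1) * (s ^ (w + 1) - a ^ (w + 1))) (C * t ^ w) t := by
    intro t ht
    refine (((Real.hasDerivAt_rpow_const (p := w + 1) (.inl (ha.trans_le ht.1).ne')).sub_const
      (a ^ (w + 1))).const_mul (C / (w + 1))).congr_deriv ?_
    rw [add_sub_cancel_right, ← mul_assoc, div_mul_cancel₀ _ hw]
  refine image_norm_le_of_norm_deriv_right_le_deriv_boundary' (f := fun t => g t - g a)
    (fun t ht => ((hg t ht).sub_const _).continuousAt.continuousWithinAt)
    (fun t ht => ((hg t (Ico_subset_Icc_self ht)).sub_const _).hasDerivWithinAt) (by simp)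
    (fun t ht => (hB t ht).continuousAt.continuousWithinAt)
    (fun t ht => (hB t (Ico_subset_Icc_self ht)).hasDerivWithinAt)
    (fun t ht => hbd t (Ico_subset_Icc_self ht)) ⟨hab, le_rfl⟩

theorem exists_tendsto_of_norm_deriv_le_rpow [CompleteSpace E] {U C w : ℝ} (hU : 0 < U)
    (hw : w < -1) (hg : ∀ t, U ≤ t → HasDerivAt g (g' t) t)
    (hbd : ∀ t, U ≤ t → ‖g' t‖ ≤ C * t ^ w) :
    ∃ L, Tendsto g atTop (𝓝 L) ∧ ∀ u, U ≤ u → ‖g u - L‖ ≤ C / -(w + 1) * u ^ (w + 1) := by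
  have hC : 0 ≤ C / -(w + 1) := div_nonneg (nonneg_of_mul_nonneg_left
    ((norm_nonneg _).trans (hbd U le_rfl)) (Real.rpow_pos_of_pos hU w)) (by linarith)
  have htail : ∀ a b, U ≤ a → a ≤ b → ‖g b - g a‖ ≤ C / -(w + 1) * a ^ (w + 1) := by
    intro a b ha hab
    have hb : 0 ≤ b ^ (w + 1) := Real.rpow_nonneg (by linarith) _
    calc ‖g b - g a‖ ≤ C / (w + 1) * (b ^ (w + 1) - a ^ (w + 1)) :=
          norm_sub_le_of_norm_deriv_le_rpow_s5 (hU.trans_le ha) hab (by linarith)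
            (fun t ht => hg t (ha.trans ht.1)) (fun t ht => hbd t (ha.trans ht.1))
      _ = C / -(w + 1) * (a ^ (w + 1) - b ^ (w + 1)) := by rw [div_neg]; ring
      _ ≤ C / -(w + 1) * a ^ (w + 1) := by gcongr; linarith
  have hdecay : Tendsto (fun t => C / -(w + 1) * max U t ^ (w + 1)) atTop (𝓝 0) := by
    have h := (tendsto_rpow_neg_atTop (y := -(w + 1)) (by linarith)).const_mul (C / -(w + 1))
    rw [mul_zero, neg_neg] at h
    exact h.congr' ((eventually_ge_atTop U).mono fun t ht => by simp [max_eq_right ht])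
  obtain ⟨L, hL⟩ := cauchySeq_tendsto_of_complete <| cauchySeq_of_le_tendsto_0'
    (s := fun t => g (max U t)) _ (fun s t hst => by
      rw [dist_comm, dist_eq_norm]
      exact htail _ _ (le_max_left _ _) (max_le_max_left _ hst)) hdecay
  have hgL : Tendsto g atTop (𝓝 L) :=
    hL.congr' ((eventually_ge_atTop U).mono fun t ht => by simp [max_eq_right ht])
  refine ⟨L, hgL, fun u hu => ?_⟩
  rw [norm_sub_rev]
  exact le_of_tendsto (hgL.sub_const (g u)).norm
    ((eventually_ge_atTop u).mono fun b hb => htail u b hu hb)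

end DerivBounds

namespace Eplus

/-- `u ^ (-β)` for `u > 0`. -/
noncomputable def weight (β : ℂ) (u : ℝ) : ℂ := Complex.exp (-β * Real.log u)

/-- `((u + w) / u) ^ β`. -/
noncomputable def shiftRatio (β : ℂ) (w u : ℝ) : ℂ :=
  Complex.exp (β * (Real.log (u + w) - Real.log u))

noncomputable def gauged (m : ℕ) (α : ℕ → ℂ) (q : ℝ → ℂ) (u : ℝ) : ℂ :=
  weight (∑ j ∈ Finset.range (m + 1), α j) u * q u

noncomputable def gaugedDeriv (m : ℕ) (v : ℕ → ℝ) (α : ℕ → ℂ) (q : ℝ → ℂ) (u : ℝ) : ℂ :=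
  (∑ j ∈ Finset.range (m + 1), α j * (shiftRatio (∑ i ∈ Finset.range (m + 1), α i) (v j) u *
    gauged m α q (u + v j) - gauged m α q u)) / u

theorem weight_ne_zero (β : ℂ) (u : ℝ) : weight β u ≠ 0 := Complex.exp_ne_zero _

theorem norm_weight (β : ℂ) {u : ℝ} (hu : 0 < u) : ‖weight β u‖ = u ^ (-β.re) := by
  rw [weight, Complex.norm_exp, Real.rpow_def_of_pos hu]
  simp [mul_comm]

theorem shiftRatio_mul_weight (β : ℂ) (w u : ℝ) :
    shiftRatio β w u * weight β (u + w) = weight β u := by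
  rw [shiftRatio, weight, weight, ← Complex.exp_add]
  ring_nf

theorem hasDerivAt_weight_mul {c q' : ℂ} {q : ℝ → ℂ} {u : ℝ} (hu : 0 < u)
    (hq : HasDerivAt q q' u) :
    HasDerivAt (fun t => weight c t * q t) (weight c u * (u * q' - c * q u) / u) u := by
  have hlog := ((Real.hasDerivAt_log hu.ne').ofReal_comp.const_mul (-c)).cexp
  refine (hlog.mul hq).congr_deriv ?_
  have hu' : (u : ℂ) ≠ 0 := Complex.ofReal_ne_zero.2 hu.ne'
  rw [weight]
  push_cast
  field_simp
  ring

theorem norm_shiftRatio_sub_one_le {β : ℂ} {S V w u : ℝ} (hβ : ‖β‖ ≤ S) (hw : w ∈ Icc 0 V)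
    (hu : 2 * S * V + 1 ≤ u) : ‖shiftRatio β w u - 1‖ ≤ 2 * S * V / u := by
  have hSV : 0 ≤ S * V := mul_nonneg ((norm_nonneg _).trans hβ) (hw.1.trans hw.2)
  have hu0 : 0 < u := by linarith
  set l := Real.log (u + w) - Real.log u
  have hl0 : 0 ≤ l := sub_nonneg.2 (Real.log_le_log hu0 (by linarith [hw.1]))
  have hl : l ≤ V / u := by
    have h := Real.log_le_sub_one_of_pos (show 0 < (u + w) / u by have := hw.1; positivity)
    rw [Real.log_div (by linarith [hw.1]) hu0.ne', add_div, div_self hu0.ne'] at h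
    exact h.trans (by rw [add_sub_cancel_left]; gcongr; exact hw.2)
  have hz : ‖β * l‖ ≤ S * V / u := by
    rw [norm_mul, Complex.norm_real, Real.norm_of_nonneg hl0, mul_div_assoc]
    exact mul_le_mul hβ hl hl0 ((norm_nonneg _).trans hβ)
  calc ‖shiftRatio β w u - 1‖ = ‖Complex.exp (β * l) - 1‖ := by simp [shiftRatio, l]
    _ ≤ 2 * ‖β * l‖ :=
      Complex.norm_exp_sub_one_le (hz.trans ((div_le_one hu0).2 (by linarith)))
    _ ≤ 2 * S * V / u := by rw [mul_assoc, mul_div_assoc]; gcongr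

theorem norm_shiftRatio_le_two {β : ℂ} {S V w u : ℝ} (hβ : ‖β‖ ≤ S) (hw : w ∈ Icc 0 V)
    (hu : 2 * S * V + 1 ≤ u) : ‖shiftRatio β w u‖ ≤ 2 := by
  have h := norm_shiftRatio_sub_one_le hβ hw hu
  have hu0 : 0 < u := by nlinarith [(norm_nonneg β).trans hβ, hw.1.trans hw.2]
  have : 2 * S * V / u ≤ 1 := (div_le_one hu0).2 (by linarith)
  calc ‖shiftRatio β w u‖ ≤ ‖shiftRatio β w u - 1‖ + ‖(1 : ℂ)‖ := norm_le_norm_sub_add _ _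
    _ ≤ 2 := by rw [norm_one]; linarith

variable {m : ℕ} {v : ℕ → ℝ} {α : ℕ → ℂ} {q : ℝ → ℂ} {S V U K x : ℝ}

theorem shifts_mem_Icc (hv0 : v 0 = 0) (hmono : StrictMonoOn v (Iic m)) :
    ∀ j ∈ Finset.range (m + 1), v j ∈ Icc 0 (v m) := fun j hj => by
  have hj : j ≤ m := Nat.lt_succ_iff.1 (Finset.mem_range.1 hj)
  exact ⟨hv0 ▸ hmono.monotoneOn (Nat.zero_le m) hj (Nat.zero_le j),
    hmono.monotoneOn hj self_mem_Iic hj⟩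

theorem shifts_pos (hv0 : v 0 = 0) (hmono : StrictMonoOn v (Iic m)) :
    ∀ j ∈ Finset.Icc 1 m, 0 < v j := fun j hj => by
  obtain ⟨h1, hm⟩ := Finset.mem_Icc.1 hj
  exact hv0 ▸ hmono (Nat.zero_le m) hm (by omega)

theorem nonneg_of_shifts_mem_Icc (hv : ∀ j ∈ Finset.range (m + 1), v j ∈ Icc 0 V) : 0 ≤ V :=
  (hv 0 (by simp)).1.trans (hv 0 (by simp)).2

theorem one_le_of_threshold (hS : ∑ j ∈ Finset.range (m + 1), ‖α j‖ ≤ S)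
    (hv : ∀ j ∈ Finset.range (m + 1), v j ∈ Icc 0 V) (hU : 2 * S * V + 1 ≤ U) : 1 ≤ U := by
  have hS0 : 0 ≤ S := (Finset.sum_nonneg fun _ _ => norm_nonneg _).trans hS
  nlinarith [nonneg_of_shifts_mem_Icc hv]

theorem norm_gaugedDeriv_le_of_forall_le {u M : ℝ}
    (hS : ∑ j ∈ Finset.range (m + 1), ‖α j‖ ≤ S) (hu : 0 < u)
    (hM : ∀ j ∈ Finset.range (m + 1), ‖shiftRatio (∑ i ∈ Finset.range (m + 1), α i) (v j) u *
      gauged m α q (u + v j) - gauged m α q u‖ ≤ M) :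
    ‖gaugedDeriv m v α q u‖ ≤ S * M / u := by
  have hM0 : 0 ≤ M := (norm_nonneg _).trans (hM 0 (by simp))
  rw [gaugedDeriv, norm_div, Complex.norm_real, Real.norm_of_nonneg hu.le]
  gcongr
  calc _ ≤ ∑ j ∈ Finset.range (m + 1), ‖α j‖ * M := (norm_sum_le _ _).trans
        (Finset.sum_le_sum fun j hj => by rw [norm_mul]; gcongr; exact hM j hj)
    _ ≤ S * M := by rw [← Finset.sum_mul]; gcongr

theorem norm_gaugedDeriv_le_rpow_sub_one (hS : ∑ j ∈ Finset.range (m + 1), ‖α j‖ ≤ S)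
    (hv : ∀ j ∈ Finset.range (m + 1), v j ∈ Icc 0 V) (hU : 2 * S * V + 1 ≤ U)
    (hg : ∀ t, U ≤ t → ‖gauged m α q t‖ ≤ K * t ^ x) {u : ℝ} (hu : U ≤ u) :
    ‖gaugedDeriv m v α q u‖ ≤ 3 * S * K * (1 + V) ^ max x 0 * u ^ (x - 1) := by
  have hU1 := one_le_of_threshold hS hv hU
  have hu1 : 1 ≤ u := hU1.trans hu
  have hu0 : 0 < u := by linarith
  have hK := nonneg_of_forall_norm_le_mul_rpow (by linarith) hg
  have hκ : 1 ≤ (1 + V) ^ max x 0 :=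
    Real.one_le_rpow (by linarith [nonneg_of_shifts_mem_Icc hv]) (le_max_right _ _)
  refine (norm_gaugedDeriv_le_of_forall_le (M := 3 * K * (1 + V) ^ max x 0 * u ^ x) hS hu0
    fun j hj => ?_).trans_eq ?_
  · have hshift := norm_add_le_of_forall_norm_le_mul_rpow (by linarith) hg hu (hv j hj)
    have hself : ‖gauged m α q u‖ ≤ K * ((1 + V) ^ max x 0 * u ^ x) :=
      (hg u hu).trans (by gcongr; exact le_mul_of_one_le_left (by positivity) hκ)
    calc _ ≤ ‖shiftRatio _ (v j) u‖ * ‖gauged m α q (u + v j)‖ + ‖gauged m α q u‖ :=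
          (norm_sub_le _ _).trans_eq (by rw [norm_mul])
      _ ≤ 2 * (K * ((1 + V) ^ max x 0 * u ^ x)) + K * ((1 + V) ^ max x 0 * u ^ x) := by
          gcongr
          exact norm_shiftRatio_le_two ((norm_sum_le _ _).trans hS) (hv j hj) (by linarith)
      _ = 3 * K * (1 + V) ^ max x 0 * u ^ x := by ring
  · rw [Real.rpow_sub_one hu0.ne']
    ring

end Eplus

namespace SolvesEplus

open Eplus

variable {m : ℕ} {v : ℕ → ℝ} {α : ℕ → ℂ} {q : ℝ → ℂ} {S V U K x : ℝ}

theorem const_mul_add_const_mul {q₁ q₂ : ℝ → ℂ} (hq₁ : SolvesEplus m v α q₁)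
    (hq₂ : SolvesEplus m v α q₂) (a b : ℂ) :
    SolvesEplus m v α (fun u => a * q₁ u + b * q₂ u) := by
  intro u hu
  obtain ⟨hd₁, he₁⟩ := hq₁ u hu
  obtain ⟨hd₂, he₂⟩ := hq₂ u hu
  refine ⟨(hd₁.const_mul a).add (hd₂.const_mul b), ?_⟩
  rw [deriv_fun_add (hd₁.const_mul a) (hd₂.const_mul b), deriv_const_mul a hd₁,
    deriv_const_mul b hd₂, mul_add, mul_left_comm, he₁, mul_left_comm, he₂, Finset.mul_sum,
    Finset.mul_sum, ← Finset.sum_add_distrib]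
  exact Finset.sum_congr rfl fun j _ => by ring

theorem hasDerivAt_gauged (hq : SolvesEplus m v α q) {u : ℝ} (hu : 0 < u) :
    HasDerivAt (gauged m α q) (gaugedDeriv m v α q u) u := by
  obtain ⟨hd, heq⟩ := hq u hu
  refine (hasDerivAt_weight_mul hu hd.hasDerivAt).congr_deriv ?_
  rw [gaugedDeriv, heq, Finset.sum_mul, ← Finset.sum_sub_distrib, Finset.mul_sum]
  congr 1
  refine Finset.sum_congr rfl fun j _ => ?_
  rw [gauged, gauged, ← mul_assoc, shiftRatio_mul_weight]
  ring

theorem norm_gauged_add_sub_le (hq : SolvesEplus m v α q)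
    (hS : ∑ j ∈ Finset.range (m + 1), ‖α j‖ ≤ S)
    (hv : ∀ j ∈ Finset.range (m + 1), v j ∈ Icc 0 V) (hU : 2 * S * V + 1 ≤ U)
    (hg : ∀ t, U ≤ t → ‖gauged m α q t‖ ≤ K * t ^ x) {u w : ℝ} (hu : U ≤ u)
    (hw : w ∈ Icc 0 V) :
    ‖gauged m α q (u + w) - gauged m α q u‖ ≤
      3 * S * V * K * ((1 + V) ^ max x 0) ^ 2 * u ^ (x - 1) := by
  have hV := nonneg_of_shifts_mem_Icc hv
  have hS0 : 0 ≤ S := (Finset.sum_nonneg fun _ _ => norm_nonneg _).trans hS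
  have hU1 := one_le_of_threshold hS hv hU
  have hu1 : 1 ≤ u := hU1.trans hu
  have hK := nonneg_of_forall_norm_le_mul_rpow (by linarith) hg
  have hκ : (1 + V) ^ max (x - 1) 0 ≤ (1 + V) ^ max x 0 :=
    Real.rpow_le_rpow_of_exponent_le (by linarith) (max_le_max (by linarith) le_rfl)
  have hbd : ∀ s ∈ Ico u (u + w), ‖gaugedDeriv m v α q s‖ ≤
      3 * S * K * ((1 + V) ^ max x 0) ^ 2 * u ^ (x - 1) := by
    intro s hs
    calc _ ≤ 3 * S * K * (1 + V) ^ max x 0 * s ^ (x - 1) :=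
          norm_gaugedDeriv_le_rpow_sub_one hS hv hU hg (hu.trans hs.1)
      _ ≤ 3 * S * K * (1 + V) ^ max x 0 * ((1 + V) ^ max x 0 * u ^ (x - 1)) := by
          gcongr
          calc s ^ (x - 1) ≤ (1 + V) ^ max (x - 1) 0 * u ^ (x - 1) :=
                Real.rpow_le_one_add_rpow_mul _ hu1 hs.1 (by linarith [hs.2, hw.2])
            _ ≤ _ := by gcongr
      _ = _ := by ring
  have h := norm_image_sub_le_of_norm_deriv_le_segment'
    (fun s hs => (hq.hasDerivAt_gauged (by linarith [hs.1])).hasDerivWithinAt) hbd (u + w)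
    ⟨by linarith [hw.1], le_rfl⟩
  rw [add_sub_cancel_left] at h
  refine h.trans ?_
  calc _ ≤ 3 * S * K * ((1 + V) ^ max x 0) ^ 2 * u ^ (x - 1) * V := by gcongr; exact hw.2
    _ = _ := by ring

theorem norm_gaugedDeriv_le_rpow_sub_two (hq : SolvesEplus m v α q)
    (hS : ∑ j ∈ Finset.range (m + 1), ‖α j‖ ≤ S)
    (hv : ∀ j ∈ Finset.range (m + 1), v j ∈ Icc 0 V) (hU : 2 * S * V + 1 ≤ U)
    (hg : ∀ t, U ≤ t → ‖gauged m α q t‖ ≤ K * t ^ x) {u : ℝ} (hu : U ≤ u) :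
    ‖gaugedDeriv m v α q u‖ ≤ 5 * S ^ 2 * V * ((1 + V) ^ max x 0) ^ 2 * K * u ^ (x - 2) := by
  have hV := nonneg_of_shifts_mem_Icc hv
  have hS0 : 0 ≤ S := (Finset.sum_nonneg fun _ _ => norm_nonneg _).trans hS
  have hU1 := one_le_of_threshold hS hv hU
  have hu1 : 1 ≤ u := hU1.trans hu
  have hu0 : 0 < u := by linarith
  have hK := nonneg_of_forall_norm_le_mul_rpow (by linarith) hg
  have hκ : 1 ≤ (1 + V) ^ max x 0 := Real.one_le_rpow (by linarith) (le_max_right _ _)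
  refine (norm_gaugedDeriv_le_of_forall_le
    (M := 5 * S * V * K * ((1 + V) ^ max x 0) ^ 2 * u ^ (x - 1)) hS hu0 fun j hj => ?_).trans_eq ?_
  · set ρ := shiftRatio (∑ i ∈ Finset.range (m + 1), α i) (v j) u
    have hshift := norm_add_le_of_forall_norm_le_mul_rpow (by linarith) hg hu (hv j hj)
    calc _ = ‖(ρ - 1) * gauged m α q (u + v j) +
          (gauged m α q (u + v j) - gauged m α q u)‖ := by ring_nf
      _ ≤ ‖ρ - 1‖ * ‖gauged m α q (u + v j)‖ +
          ‖gauged m α q (u + v j) - gauged m α q u‖ := (norm_add_le _ _).trans_eq (by rw [norm_mul])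
      _ ≤ 2 * S * V / u * (K * ((1 + V) ^ max x 0 * u ^ x)) +
          3 * S * V * K * ((1 + V) ^ max x 0) ^ 2 * u ^ (x - 1) := by
          gcongr
          · exact norm_shiftRatio_sub_one_le ((norm_sum_le _ _).trans hS) (hv j hj) (by linarith)
          · exact hq.norm_gauged_add_sub_le hS hv hU hg hu (hv j hj)
      _ = 2 * S * V * K * (1 + V) ^ max x 0 * u ^ (x - 1) +
          3 * S * V * K * ((1 + V) ^ max x 0) ^ 2 * u ^ (x - 1) := by
          rw [Real.rpow_sub_one hu0.ne']
          ring
      _ ≤ _ := by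
          have : (1 + V) ^ max x 0 ≤ ((1 + V) ^ max x 0) ^ 2 := by nlinarith
          have : 0 ≤ S * V * K * u ^ (x - 1) := by positivity
          nlinarith
  · rw [show x - 2 = x - 1 - 1 by ring, Real.rpow_sub_one hu0.ne' (x - 1)]
    ring

theorem exists_norm_gauged_le_rpow_sub_one (hq : SolvesEplus m v α q)
    (hS : ∑ j ∈ Finset.range (m + 1), ‖α j‖ ≤ S)
    (hv : ∀ j ∈ Finset.range (m + 1), v j ∈ Icc 0 V) (hU : 2 * S * V + 1 ≤ U) (hx : 1 < x)
    (hg : ∀ t, U ≤ t → ‖gauged m α q t‖ ≤ K * t ^ x) :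
    ∃ K', ∀ t, U ≤ t → ‖gauged m α q t‖ ≤ K' * t ^ (x - 1) := by
  set C := 5 * S ^ 2 * V * ((1 + V) ^ max x 0) ^ 2 * K
  have hU1 := one_le_of_threshold hS hv hU
  have hC : 0 ≤ C / (x - 1) := by
    have := nonneg_of_shifts_mem_Icc hv
    have := nonneg_of_forall_norm_le_mul_rpow (by linarith) hg
    have : 0 < x - 1 := by linarith
    positivity
  refine ⟨‖gauged m α q U‖ + C / (x - 1), fun t ht => ?_⟩
  have hdiff := norm_sub_le_of_norm_deriv_le_rpow_s5 (by linarith) ht (by linarith)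
    (fun s hs => hq.hasDerivAt_gauged (by linarith [hs.1]))
    (fun s hs => hq.norm_gaugedDeriv_le_rpow_sub_two hS hv hU hg hs.1)
  rw [show x - 2 + 1 = x - 1 by ring] at hdiff
  have hU0 : 0 ≤ U ^ (x - 1) := Real.rpow_nonneg (by linarith) _
  have ht1 : 1 ≤ t ^ (x - 1) := Real.one_le_rpow (by linarith) (by linarith)
  calc ‖gauged m α q t‖ ≤ ‖gauged m α q U‖ + ‖gauged m α q t - gauged m α q U‖ :=
        norm_le_norm_add_norm_sub' _ _
    _ ≤ ‖gauged m α q U‖ * t ^ (x - 1) + C / (x - 1) * t ^ (x - 1) := by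
        gcongr
        · exact le_mul_of_one_le_right (norm_nonneg _) ht1
        · exact hdiff.trans (by gcongr; linarith)
    _ = _ := by ring

theorem exists_tendsto_gauged_of_bound (hq : SolvesEplus m v α q)
    (hS : ∑ j ∈ Finset.range (m + 1), ‖α j‖ ≤ S)
    (hv : ∀ j ∈ Finset.range (m + 1), v j ∈ Icc 0 V) (hU : 2 * S * V + 1 ≤ U)
    (hg : ∀ t, U ≤ t → ‖gauged m α q t‖ ≤ K * t ^ x) :
    ∃ L, Tendsto (gauged m α q) atTop (𝓝 L) := by
  have hU1 := one_le_of_threshold hS hv hU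
  -- half-integer exponents never meet `t ^ (-1)`, whose primitive is a logarithm
  suffices h : ∀ N : ℕ, ∀ K, (∀ t, U ≤ t → ‖gauged m α q t‖ ≤ K * t ^ (N + 1 / 2 : ℝ)) →
      ∃ L, Tendsto (gauged m α q) atTop (𝓝 L) by
    have hK := nonneg_of_forall_norm_le_mul_rpow (by linarith) hg
    refine h ⌈x⌉₊ K fun t ht => (hg t ht).trans ?_
    gcongr
    · linarith
    · linarith [Nat.le_ceil x]
  intro N
  induction N with
  | zero =>
    intro K hg
    obtain ⟨L, hL, -⟩ := exists_tendsto_of_norm_deriv_le_rpow (by linarith) (by norm_num)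
      (fun t ht => hq.hasDerivAt_gauged (by linarith))
      (fun t ht => hq.norm_gaugedDeriv_le_rpow_sub_two hS hv hU hg ht)
    exact ⟨L, hL⟩
  | succ N ih =>
    intro K hg
    obtain ⟨K', hK'⟩ := hq.exists_norm_gauged_le_rpow_sub_one hS hv hU
      (by push_cast; linarith [N.cast_nonneg (α := ℝ)]) hg
    exact ih K' fun t ht => (hK' t ht).trans_eq (by push_cast; ring_nf)

theorem exists_tendsto_gauged (hq : SolvesEplus m v α q)
    (hS : ∑ j ∈ Finset.range (m + 1), ‖α j‖ ≤ S)
    (hv : ∀ j ∈ Finset.range (m + 1), v j ∈ Icc 0 V) {r B u₀ : ℝ}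
    (hb : ∀ u, u₀ ≤ u → ‖q u‖ ≤ B * u ^ r) :
    ∃ L, Tendsto (gauged m α q) atTop (𝓝 L) := by
  have hU : 2 * S * V + 1 ≤ max u₀ (2 * S * V + 1) := le_max_right _ _
  refine hq.exists_tendsto_gauged_of_bound hS hv hU (K := B)
    (x := r - (∑ j ∈ Finset.range (m + 1), α j).re) fun t ht => ?_
  have ht0 : 0 < t := by linarith [one_le_of_threshold hS hv hU]
  rw [gauged, norm_mul, norm_weight _ ht0, sub_eq_neg_add, Real.rpow_add ht0,
    mul_left_comm]
  gcongr
  exact hb t (le_of_max_le_left ht)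

theorem norm_gauged_le_rpow_sub_one_of_tendsto_zero (hq : SolvesEplus m v α q)
    (hS : ∑ j ∈ Finset.range (m + 1), ‖α j‖ ≤ S)
    (hv : ∀ j ∈ Finset.range (m + 1), v j ∈ Icc 0 V) (hU : 2 * S * V + 1 ≤ U)
    (hlim : Tendsto (gauged m α q) atTop (𝓝 0)) (hx : x ≤ 0)
    (hg : ∀ t, U ≤ t → ‖gauged m α q t‖ ≤ K * t ^ x) {u : ℝ} (hu : U ≤ u) :
    ‖gauged m α q u‖ ≤ 5 * S ^ 2 * V * K * u ^ (x - 1) := by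
  have hU1 := one_le_of_threshold hS hv hU
  have hG : ∀ t, U ≤ t → ‖gaugedDeriv m v α q t‖ ≤ 5 * S ^ 2 * V * K * t ^ (x - 2) :=
    fun t ht => by simpa [max_eq_right hx] using hq.norm_gaugedDeriv_le_rpow_sub_two hS hv hU hg ht
  obtain ⟨L, hL, hbd⟩ := exists_tendsto_of_norm_deriv_le_rpow (by linarith) (by linarith)
    (fun t ht => hq.hasDerivAt_gauged (by linarith)) hG
  obtain rfl := tendsto_nhds_unique hL hlim
  have hV := nonneg_of_shifts_mem_Icc hv
  have hK := nonneg_of_forall_norm_le_mul_rpow (by linarith) hg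
  have h := hbd u hu
  rw [sub_zero, show x - 2 + 1 = x - 1 by ring] at h
  exact h.trans (mul_le_mul_of_nonneg_right (div_le_self (by positivity) (by linarith))
    (Real.rpow_nonneg (by linarith) _))

theorem eventually_eq_zero_of_tendsto_gauged_zero (hq : SolvesEplus m v α q)
    (hS : ∑ j ∈ Finset.range (m + 1), ‖α j‖ ≤ S)
    (hv : ∀ j ∈ Finset.range (m + 1), v j ∈ Icc 0 V)
    (hlim : Tendsto (gauged m α q) atTop (𝓝 0)) : ∃ T, ∀ u, T < u → q u = 0 := by
  obtain ⟨U, hU⟩ := eventually_atTop.1 <|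
    (hlim.norm.eventually (eventually_le_nhds (show ‖(0 : ℂ)‖ < 1 by simp))).and
      (eventually_ge_atTop (2 * S * V + 1))
  have hV := nonneg_of_shifts_mem_Icc hv
  set C := 5 * S ^ 2 * V
  have hdecay : ∀ n : ℕ, ∀ t, U ≤ t → ‖gauged m α q t‖ ≤ C ^ n * t ^ (-(n : ℝ)) := by
    intro n
    induction n with
    | zero => simpa using fun t ht => (hU t ht).1
    | succ n ih =>
      intro t ht
      refine (hq.norm_gauged_le_rpow_sub_one_of_tendsto_zero hS hv (hU U le_rfl).2 hlim
        (by simp) ih ht).trans_eq ?_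
      simp only [C]
      push_cast
      ring_nf
  refine ⟨max U C, fun u hu => ?_⟩
  have hu0 : 0 < u := by linarith [one_le_of_threshold hS hv (hU U le_rfl).2, le_max_left U C]
  have hg0 : gauged m α q u = 0 := by
    refine norm_le_zero_iff.1 <| ge_of_tendsto (tendsto_pow_atTop_nhds_zero_of_lt_one
      (by positivity) ((div_lt_one hu0).2 (lt_of_le_of_lt (le_max_right U C) hu)))
      (.of_forall fun n => ?_)
    calc ‖gauged m α q u‖ ≤ C ^ n * u ^ (-(n : ℝ)) := hdecay n u ((le_max_left U C).trans hu.le)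
      _ = (C / u) ^ n := by rw [Real.rpow_neg hu0.le, Real.rpow_natCast, div_pow, div_eq_mul_inv]
  exact (mul_eq_zero.1 hg0).resolve_left (weight_ne_zero _ _)

theorem eq_zero_of_eventually_eq_zero (hq : SolvesEplus m v α q) (hv0 : v 0 = 0)
    (hpos : ∀ j ∈ Finset.Icc 1 m, 0 < v j) {T : ℝ} (hT : ∀ u, T < u → q u = 0) {u : ℝ}
    (hu : 0 < u) : q u = 0 := by
  obtain ⟨ε, hεv, hε⟩ := (((Filter.eventually_all_finset _).2 fun j hj =>
    (eventually_le_nhds (hpos j hj)).filter_mono nhdsWithin_le_nhds).and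
      (self_mem_nhdsWithin (s := Ioi (0 : ℝ)))).exists
  have step : ∀ s, (∀ u, 0 < u → s < u → q u = 0) → ∀ u, 0 < u → s - ε < u → q u = 0 := by
    intro s hs u hu hsu
    rcases lt_or_ge s u with h | h
    · exact hs u hu h
    have hder : ∀ t ∈ Icc u (s + 1), HasDerivAt (fun t => weight (α 0) t * q t) 0 t := by
      intro t ht
      have ht0 : 0 < t := hu.trans_le ht.1
      obtain ⟨hd, heq⟩ := hq t ht0
      have hred : (t : ℂ) * deriv q t = α 0 * q t := by
        rw [heq, Finset.sum_range_succ', Finset.sum_eq_zero fun j hj => ?_, hv0, add_zero,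
          zero_add]
        have hj : j + 1 ∈ Finset.Icc 1 m := Finset.mem_Icc.2 ⟨by omega,
          by have := Finset.mem_range.1 hj; omega⟩
        rw [hs _ (by linarith [hpos _ hj]) (by linarith [hεv _ hj, ht.1]), mul_zero]
      simpa [hred] using hasDerivAt_weight_mul (c := α 0) ht0 hd.hasDerivAt
    have hconst := constant_of_has_deriv_right_zero
      (fun t ht => (hder t ht).continuousAt.continuousWithinAt)
      (fun t ht => (hder t (Ico_subset_Icc_self ht)).hasDerivWithinAt) (s + 1)
      ⟨by linarith, le_rfl⟩
    rw [hs (s + 1) (by linarith) (by linarith), mul_zero] at hconst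
    exact (mul_eq_zero.1 hconst.symm).resolve_left (weight_ne_zero _ _)
  have hiter : ∀ n : ℕ, ∀ u, 0 < u → T - n * ε < u → q u = 0 := by
    intro n
    induction n with
    | zero => simpa using fun u _ => hT u
    | succ n ih => exact fun u hu h => step _ ih u hu (by push_cast at h; linarith)
  obtain ⟨n, hn⟩ := exists_nat_gt ((T - u) / ε)
  exact hiter n u hu (by rw [div_lt_iff₀ hε] at hn; linarith)

theorem eq_zero_of_tendsto_gauged_zero (hq : SolvesEplus m v α q)
    (hS : ∑ j ∈ Finset.range (m + 1), ‖α j‖ ≤ S)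
    (hv : ∀ j ∈ Finset.range (m + 1), v j ∈ Icc 0 V) (hv0 : v 0 = 0)
    (hpos : ∀ j ∈ Finset.Icc 1 m, 0 < v j) (hlim : Tendsto (gauged m α q) atTop (𝓝 0))
    {u : ℝ} (hu : 0 < u) : q u = 0 :=
  let ⟨_, hT⟩ := hq.eventually_eq_zero_of_tendsto_gauged_zero hS hv hlim
  hq.eq_zero_of_eventually_eq_zero hv0 hpos hT hu

end SolvesEplus

theorem stmt5_general (m : ℕ) (v : ℕ → ℝ) (α : ℕ → ℂ)
    (hv0 : v 0 = 0) (hv : ∀ i, i < m → v i < v (i + 1))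
    (q₁ q₂ : ℝ → ℂ) (hq₁ : SolvesEplus m v α q₁) (hq₂ : SolvesEplus m v α q₂)
    (r₁ r₂ B₁ B₂ u₁ u₂ : ℝ)
    (hbound₁ : ∀ u : ℝ, u₁ ≤ u → ‖q₁ u‖ ≤ B₁ * u ^ r₁)
    (hbound₂ : ∀ u : ℝ, u₂ ≤ u → ‖q₂ u‖ ≤ B₂ * u ^ r₂) :
    ∃ c₁ c₂ : ℂ, (c₁ ≠ 0 ∨ c₂ ≠ 0) ∧
      ∀ u : ℝ, 0 < u → c₁ * q₁ u + c₂ * q₂ u = 0 := by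
  have hmono : StrictMonoOn v (Iic m) := strictMonoOn_Iic_of_lt_succ hv
  have hvV := Eplus.shifts_mem_Icc hv0 hmono
  have hpos := Eplus.shifts_pos hv0 hmono
  have hS := le_refl (∑ j ∈ Finset.range (m + 1), ‖α j‖)
  obtain ⟨L₁, hL₁⟩ := hq₁.exists_tendsto_gauged hS hvV hbound₁
  obtain ⟨L₂, hL₂⟩ := hq₂.exists_tendsto_gauged hS hvV hbound₂
  by_cases h : L₁ = 0
  · refine ⟨1, 0, .inl one_ne_zero, fun u hu => ?_⟩
    simp [hq₁.eq_zero_of_tendsto_gauged_zero hS hvV hv0 hpos (h ▸ hL₁) hu]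
  refine ⟨L₂, -L₁, .inr (neg_ne_zero.2 h), fun u hu =>
    (hq₁.const_mul_add_const_mul hq₂ L₂ (-L₁)).eq_zero_of_tendsto_gauged_zero hS hvV hv0 hpos
      ?_ hu⟩
  have hlim := (hL₁.const_mul L₂).add (hL₂.const_mul (-L₁))
  rw [show L₂ * L₁ + -L₁ * L₂ = 0 by ring] at hlim
  exact hlim.congr fun u => by simp only [Eplus.gauged]; ring

theorem stmt5 (m : ℕ) (v : ℕ → ℝ) (α : ℕ → ℂ)
    (hv0 : v 0 = 0) (hv : ∀ i, i < m → v i < v (i + 1))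
    (hα : ∀ j, 1 ≤ j → j ≤ m → α j ≠ 0)
    (q₁ q₂ : ℝ → ℂ) (hq₁ : SolvesEplus m v α q₁) (hq₂ : SolvesEplus m v α q₂)
    (r₁ r₂ B₁ B₂ u₁ u₂ : ℝ) (hB₁ : 0 < B₁) (hB₂ : 0 < B₂) (hu₁ : 0 < u₁) (hu₂ : 0 < u₂)
    (hbound₁ : ∀ u : ℝ, u₁ ≤ u → ‖q₁ u‖ ≤ B₁ * u ^ r₁)
    (hbound₂ : ∀ u : ℝ, u₂ ≤ u → ‖q₂ u‖ ≤ B₂ * u ^ r₂) :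
    ∃ c₁ c₂ : ℂ, (c₁ ≠ 0 ∨ c₂ ≠ 0) ∧
      ∀ u : ℝ, 0 < u → c₁ * q₁ u + c₂ * q₂ u = 0 :=
  stmt5_general m v α hv0 hv q₁ q₂ hq₁ hq₂ r₁ r₂ B₁ B₂ u₁ u₂ hbound₁ hbound₂
end

section
/- Assume β = −1 and suppose q : ℝ → ℂ solves (E+). Then there exists a complex number A such that for all u > 0, u·q(u) = A + Σ_{j=1}^m c_j ∫_{v_{j−1}}^{v_j} q(u + t) dt, where c_j := Σ_{i=j}^m α_i for j = 1, ..., m. -/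
open MeasureTheory Filter Set

/-!
Put `G(u) = u q(u) - ∑_j c_j ∫_{v_{j-1}}^{v_j} q(u + t) dt`. Differentiating under the sliding
window, `G'(u) = q(u) + u q'(u) - ∑_j c_j (q(u + v_j) - q(u + v_{j-1}))`, and by summation by
parts the last sum is `∑_{j ≥ 1} α_j (q(u + v_j) - q(u))`. Substituting (E+) leaves
`G'(u) = (1 + β) q(u) = 0`, so `G` is constant on `(0, ∞)`.
-/

namespace Finset

variable {R : Type*}

theorem sum_Icc_one_sub_pred [AddCommGroup R] (f : ℕ → R) (n : ℕ) :
    ∑ j ∈ Icc 1 n, (f j - f (j - 1)) = f n - f 0 := by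
  induction n with
  | zero => simp
  | succ n ih =>
    rw [sum_Icc_succ_top (by omega), ih, Nat.add_sub_cancel]
    abel

theorem sum_Icc_tail_mul_sub_pred [CommRing R] (m : ℕ) (α f : ℕ → R) :
    ∑ j ∈ Icc 1 m, (∑ i ∈ Icc j m, α i) * (f j - f (j - 1))
      = ∑ j ∈ Icc 1 m, α j * (f j - f 0) :=
  calc ∑ j ∈ Icc 1 m, (∑ i ∈ Icc j m, α i) * (f j - f (j - 1))
      = ∑ j ∈ Icc 1 m, ∑ i ∈ Icc j m, α i * (f j - f (j - 1)) := by
        simp only [sum_mul]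
    _ = ∑ i ∈ Icc 1 m, ∑ j ∈ Icc 1 i, α i * (f j - f (j - 1)) :=
        sum_comm' fun j i => by simp only [mem_Icc]; omega
    _ = ∑ j ∈ Icc 1 m, α j * (f j - f 0) := by
        simp only [← mul_sum, sum_Icc_one_sub_pred]

theorem add_sum_range_mul_eq_sum_Icc_tail_mul_sub_pred [CommRing R] (m : ℕ) (α f : ℕ → R)
    (hα : ∑ j ∈ range (m + 1), α j = -1) :
    f 0 + ∑ j ∈ range (m + 1), α j * f j
      = ∑ j ∈ Icc 1 m, (∑ i ∈ Icc j m, α i) * (f j - f (j - 1)) := by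
  rw [sum_Icc_tail_mul_sub_pred, sum_range_eq_add_Ico _ (by omega : 0 < m + 1),
    Ico_add_one_right_eq_Icc]
  rw [sum_range_eq_add_Ico _ (by omega : 0 < m + 1), Ico_add_one_right_eq_Icc] at hα
  simp only [mul_sub, sum_sub_distrib, ← sum_mul]
  linear_combination f 0 * hα

end Finset

theorem hasDerivAt_intervalIntegral_comp_add {E : Type*} [NormedAddCommGroup E]
    [NormedSpace ℝ E] [CompleteSpace E] {q : ℝ → E} {a b c u : ℝ}
    (hq : ContinuousOn q (Ioi c)) (ha : c < u + a) (hb : c < u + b) :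
    HasDerivAt (fun x => ∫ t in a..b, q (x + t)) (q (u + b) - q (u + a)) u := by
  have hint : ∀ x y, c < x → c < y → IntervalIntegrable q volume x y := fun x y hx hy =>
    (hq.mono fun t ht => (lt_min hx hy).trans_le ht.1).intervalIntegrable
  set F := fun y => ∫ s in (u + a)..y, q s
  have hF : ∀ y, c < y → HasDerivAt F (q y) y := fun y hy =>
    intervalIntegral.integral_hasDerivAt_right (hint _ _ ha hy)
      (hq.stronglyMeasurableAtFilter isOpen_Ioi _ hy) (hq.continuousAt (Ioi_mem_nhds hy))
  have hwindow :
      (fun x => ∫ t in a..b, q (x + t)) =ᶠ[nhds u] fun x => F (x + b) - F (x + a) := by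
    filter_upwards [Ioi_mem_nhds (show c - a < u by linarith),
      Ioi_mem_nhds (show c - b < u by linarith)] with x hxa hxb
    rw [intervalIntegral.integral_comp_add_left,
      intervalIntegral.integral_interval_sub_left (hint _ _ ha (by linarith [mem_Ioi.1 hxb]))
        (hint _ _ ha (by linarith [mem_Ioi.1 hxa]))]
  exact (((hF _ hb).comp_add_const u b).sub ((hF _ ha).comp_add_const u a)).congr_of_eventuallyEq
    hwindow

theorem nonneg_of_lt_succ {β : Type*} [Preorder β] [Zero β] {v : ℕ → β} {m : ℕ}
    (hv0 : v 0 = 0) (hv : ∀ i, i < m → v i < v (i + 1)) {j : ℕ} (hj : j ≤ m) : 0 ≤ v j :=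
  hv0 ▸ (strictMonoOn_Iic_of_lt_succ (by simpa using hv)).monotoneOn
    (mem_Iic.2 m.zero_le) hj j.zero_le

theorem SolvesEplus.hasDerivAt_mul_sub_sum_integral {m : ℕ} {v : ℕ → ℝ} {α : ℕ → ℂ}
    {q : ℝ → ℂ} (hq : SolvesEplus m v α q) (hv0 : v 0 = 0)
    (hv : ∀ i, i < m → v i < v (i + 1)) (hβ : ∑ j ∈ Finset.range (m + 1), α j = -1)
    {u : ℝ} (hu : 0 < u) :
    HasDerivAt (fun x : ℝ => (x : ℂ) * q x - ∑ j ∈ Finset.Icc 1 m,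
      (∑ i ∈ Finset.Icc j m, α i) * ∫ t in (v (j - 1))..(v j), q (x + t)) 0 u := by
  obtain ⟨hdiff, hE⟩ := hq u hu
  have hcont : ContinuousOn q (Ioi 0) := fun x hx =>
    (hq x hx).1.continuousAt.continuousWithinAt
  have hwindow : ∀ j ∈ Finset.Icc 1 m,
      HasDerivAt (fun x => ∫ t in (v (j - 1))..(v j), q (x + t))
        (q (u + v j) - q (u + v (j - 1))) u := fun j hj => by
    obtain ⟨-, hjm⟩ := Finset.mem_Icc.1 hj
    exact hasDerivAt_intervalIntegral_comp_add hcont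
      (by linarith [nonneg_of_lt_succ hv0 hv (show j - 1 ≤ m by omega)])
      (by linarith [nonneg_of_lt_succ hv0 hv hjm])
  have hparts := Finset.add_sum_range_mul_eq_sum_Icc_tail_mul_sub_pred m α
    (fun j => q (u + v j)) hβ
  refine (((hasDerivAt_id u).ofReal_comp.fun_mul hdiff.hasDerivAt).fun_sub
    (HasDerivAt.fun_sum fun j hj => (hwindow j hj).const_mul _)).congr_deriv ?_
  simp only [id, Complex.ofReal_one, one_mul, hv0, add_zero] at hparts ⊢
  rw [hE, ← hparts, sub_self]

theorem stmt7_general (m : ℕ) (v : ℕ → ℝ) (α : ℕ → ℂ)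
    (hv0 : v 0 = 0) (hv : ∀ i, i < m → v i < v (i + 1))
    (hβ : (∑ j ∈ Finset.range (m + 1), α j) = -1)
    (q : ℝ → ℂ) (hq : SolvesEplus m v α q) :
    ∃ A : ℂ, ∀ u : ℝ, 0 < u →
      (u : ℂ) * q u = A + ∑ j ∈ Finset.Icc 1 m,
        (∑ i ∈ Finset.Icc j m, α i) * ∫ t in (v (j - 1))..(v j), q (u + t) := by
  have hG := fun u (hu : u ∈ Ioi (0 : ℝ)) => hq.hasDerivAt_mul_sub_sum_integral hv0 hv hβ hu
  obtain ⟨A, hA⟩ := isOpen_Ioi.exists_is_const_of_deriv_eq_zero isPreconnected_Ioi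
    (fun u hu => (hG u hu).differentiableAt.differentiableWithinAt) fun u hu => (hG u hu).deriv
  exact ⟨A, fun u hu => by linear_combination hA u hu⟩

theorem stmt7 (m : ℕ) (v : ℕ → ℝ) (α : ℕ → ℂ)
    (hv0 : v 0 = 0) (hv : ∀ i, i < m → v i < v (i + 1))
    (hα : ∀ j, 1 ≤ j → j ≤ m → α j ≠ 0)
    (hβ : (∑ j ∈ Finset.range (m + 1), α j) = -1)
    (q : ℝ → ℂ) (hq : SolvesEplus m v α q) :
    ∃ A : ℂ, ∀ u : ℝ, 0 < u →
      (u : ℂ) * q u = A + ∑ j ∈ Finset.Icc 1 m,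
        (∑ i ∈ Finset.Icc j m, α i) * ∫ t in (v (j - 1))..(v j), q (u + t) :=
  stmt7_general m v α hv0 hv hβ q hq
end

section
/- Suppose q is not proportional to q_κ*: for every real number A there exists u > 0 with q(u) ≠ A·q_κ*(u). Then q is not exponentially bounded: for every λ > 0 and all constants B, u_0 > 0 there exists u ≥ u_0 with |q(u)| > B·e^{λu}. -/
open MeasureTheory Filter Set

/-- The solution `q_κ*(u) = ∫_0^∞ exp(−u x − κ ∫_0^x (1 − e^{−t})/t dt) dx`. -/
noncomputable def qkstar (κ : ℝ) (u : ℝ) : ℝ :=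
  ∫ x in Set.Ioi (0 : ℝ),
    Real.exp (-(u * x) - κ * ∫ t in (0 : ℝ)..x, (1 - Real.exp (-t)) / t)

/-!
Both `q` and `q_κ*` make `u f(u) + κ ∫_u^{u+1} f` constant on `(0, ∞)`: for `q` its derivative
vanishes by the equation, and for `q_κ*` it equals `1`, by integrating the `x`-derivative of the
integrand over `(0, ∞)` and using Fubini. Hence `g = q - A q_κ*`, with `A` the constant of `q`,
satisfies `u |g(u)| ≤ κ ∫_u^{u+1} |g|`. If `q`, and so `g`, grew at most like `e^{λu}`, iterating
this inequality for `u ≥ 2κe^λ` would halve the bound each time, so `g` vanishes near infinity;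
Grönwall's inequality for the tail integral `∫_u^∞ |g|`, run backwards, then gives `g = 0` on
`(0, ∞)`, i.e. `q = A q_κ*`.
-/

open Topology Asymptotics Real Interval

noncomputable def einKernel (t : ℝ) : ℝ := (1 - exp (-t)) / t

/-- The entire exponential integral `Ein`. -/
noncomputable def ein (x : ℝ) : ℝ := ∫ t in (0 : ℝ)..x, einKernel t

noncomputable def qkstarIntegrand (κ u x : ℝ) : ℝ := exp (-(u * x) - κ * ein x)

lemma qkstar_eq_integral (κ u : ℝ) :
    qkstar κ u = ∫ x in Ioi (0 : ℝ), qkstarIntegrand κ u x := rfl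

section Ein

variable {t x : ℝ}

lemma einKernel_nonneg (ht : 0 ≤ t) : 0 ≤ einKernel t :=
  div_nonneg (by simpa using exp_le_one_iff.2 (neg_nonpos.2 ht)) ht

lemma einKernel_le_one (ht : 0 ≤ t) : einKernel t ≤ 1 := by
  rcases ht.eq_or_lt with rfl | ht
  · simp [einKernel]
  · rw [einKernel, div_le_one ht]
    linarith [add_one_le_exp (-t)]

lemma measurable_einKernel : Measurable einKernel := by
  unfold einKernel; fun_prop

lemma intervalIntegrable_einKernel (hx : 0 ≤ x) : IntervalIntegrable einKernel volume 0 x := by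
  rw [intervalIntegrable_iff_integrableOn_Ioc_of_le hx]
  refine Measure.integrableOn_of_bounded (M := 1) (by simp)
    measurable_einKernel.aestronglyMeasurable ?_
  filter_upwards [ae_restrict_mem measurableSet_Ioc] with t ht
  rw [norm_of_nonneg (einKernel_nonneg ht.1.le)]
  exact einKernel_le_one ht.1.le

lemma ein_nonneg (hx : 0 ≤ x) : 0 ≤ ein x :=
  intervalIntegral.integral_nonneg hx fun _ ht => einKernel_nonneg ht.1

lemma hasDerivAt_ein (hx : 0 < x) : HasDerivAt ein (einKernel x) x :=
  intervalIntegral.integral_hasDerivAt_right (f := einKernel) (a := 0)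
    (intervalIntegrable_einKernel hx.le)
    measurable_einKernel.stronglyMeasurable.stronglyMeasurableAtFilter
    (((continuous_const.sub (continuous_exp.comp continuous_neg)).continuousAt).div
      continuousAt_id hx.ne')

lemma lipschitzOnWith_ein : LipschitzOnWith 1 ein (Ici 0) := by
  refine LipschitzOnWith.of_dist_le_mul fun x hx y hy => ?_
  have hbound : ∀ t ∈ Ι y x, ‖einKernel t‖ ≤ 1 := fun t ht => by
    have ht0 : 0 ≤ t := le_trans (le_min hy hx) (le_of_lt (by simpa using ht.1))
    rw [norm_of_nonneg (einKernel_nonneg ht0)]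
    exact einKernel_le_one ht0
  rw [dist_eq, dist_eq, ein, ein, intervalIntegral.integral_interval_sub_left
    (intervalIntegrable_einKernel hx) (intervalIntegrable_einKernel hy)]
  simpa using intervalIntegral.norm_integral_le_of_norm_le_const hbound

end Ein

section Integrand

variable {κ u x : ℝ}

lemma continuousOn_qkstarIntegrand (κ u : ℝ) : ContinuousOn (qkstarIntegrand κ u) (Ici 0) :=
  continuous_exp.comp_continuousOn
    ((continuous_const.mul continuous_id).neg.continuousOn.sub
      (lipschitzOnWith_ein.continuousOn.const_smul κ))

lemma qkstarIntegrand_pos : 0 < qkstarIntegrand κ u x := exp_pos _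

lemma qkstarIntegrand_le (hκ : 0 ≤ κ) (hx : 0 ≤ x) : qkstarIntegrand κ u x ≤ exp (-u * x) :=
  exp_le_exp.2 (by nlinarith [ein_nonneg hx])

lemma integrableOn_qkstarIntegrand (hκ : 0 ≤ κ) (hu : 0 < u) :
    IntegrableOn (qkstarIntegrand κ u) (Ioi 0) := by
  refine (exp_neg_integrableOn_Ioi 0 hu).mono'
    (((continuousOn_qkstarIntegrand κ u).mono Ioi_subset_Ici_self).aestronglyMeasurable
      measurableSet_Ioi) ?_
  filter_upwards [ae_restrict_mem measurableSet_Ioi] with x hx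
  rw [norm_of_nonneg qkstarIntegrand_pos.le]
  exact qkstarIntegrand_le hκ (le_of_lt hx)

lemma hasDerivAt_qkstarIntegrand (hx : 0 < x) :
    HasDerivAt (qkstarIntegrand κ u) ((-u - κ * einKernel x) * qkstarIntegrand κ u x) x := by
  have hexp : HasDerivAt (fun y => -(u * y) - κ * ein y) (-u - κ * einKernel x) x := by
    simpa using ((hasDerivAt_id x).const_mul u).fun_neg.fun_sub ((hasDerivAt_ein hx).const_mul κ)
  exact hexp.exp.congr_deriv (mul_comm _ _)

end Integrand

section Qkstar

variable {κ u : ℝ}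

lemma qkstar_nonneg (κ u : ℝ) : 0 ≤ qkstar κ u :=
  setIntegral_nonneg measurableSet_Ioi fun _ _ => qkstarIntegrand_pos.le

lemma continuousAt_qkstar (hκ : 0 ≤ κ) (hu : 0 < u) : ContinuousAt (qkstar κ) u := by
  change ContinuousAt (fun v => ∫ x in Ioi (0 : ℝ), qkstarIntegrand κ v x) u
  refine continuousAt_of_dominated (bound := fun x => exp (-(u / 2) * x)) ?_ ?_
    (exp_neg_integrableOn_Ioi 0 (half_pos hu)) ?_
  · exact Eventually.of_forall fun v => ((continuousOn_qkstarIntegrand κ v).mono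
      Ioi_subset_Ici_self).aestronglyMeasurable measurableSet_Ioi
  · filter_upwards [Ioi_mem_nhds (half_lt_self hu)] with v hv
    filter_upwards [ae_restrict_mem measurableSet_Ioi] with x hx
    rw [norm_of_nonneg qkstarIntegrand_pos.le]
    refine (qkstarIntegrand_le hκ (le_of_lt hx)).trans (exp_le_exp.2 ?_)
    nlinarith [mem_Ioi.1 hx, mem_Ioi.1 hv]
  · exact Eventually.of_forall fun x => by simp only [qkstarIntegrand]; fun_prop

lemma intervalIntegral_exp_neg_mul {x : ℝ} (hx : x ≠ 0) :
    ∫ t in u..u + 1, exp (-(t * x)) = exp (-(u * x)) * einKernel x := by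
  have hderiv : ∀ t ∈ [[u, u + 1]],
      HasDerivAt (fun t => -exp (-(t * x)) / x) (exp (-(t * x))) t := fun t _ => by
    refine ((hasDerivAt_mul_const x).fun_neg.exp.fun_neg.div_const x).congr_deriv ?_
    field_simp
  rw [intervalIntegral.integral_eq_sub_of_hasDerivAt hderiv
    ((by fun_prop : Continuous fun t => exp (-(t * x))).intervalIntegrable _ _), einKernel,
    show -((u + 1) * x) = -(u * x) + -x by ring, exp_add]
  ring

lemma integrable_qkstarIntegrand_prod (hκ : 0 ≤ κ) (hu : 0 < u) :
    Integrable (Function.uncurry fun t x => qkstarIntegrand κ t x)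
      ((volume.restrict (Ioc u (u + 1))).prod (volume.restrict (Ioi 0))) := by
  have hmeas : AEStronglyMeasurable (Function.uncurry fun t x => qkstarIntegrand κ t x)
      (volume.restrict (Ioc u (u + 1) ×ˢ Ioi 0)) := by
    refine ContinuousOn.aestronglyMeasurable ?_ (measurableSet_Ioc.prod measurableSet_Ioi)
    refine continuous_exp.comp_continuousOn
      ((continuous_fst.mul continuous_snd).neg.continuousOn.sub (ContinuousOn.const_smul ?_ κ))
    exact lipschitzOnWith_ein.continuousOn.comp continuous_snd.continuousOn
      fun p hp => mem_Ici.2 (le_of_lt hp.2)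
  have hdom : Integrable (fun p : ℝ × ℝ => (1 : ℝ) * exp (-u * p.2))
      ((volume.restrict (Ioc u (u + 1))).prod (volume.restrict (Ioi 0))) :=
    (integrable_const 1).mul_prod (exp_neg_integrableOn_Ioi 0 hu)
  rw [Measure.prod_restrict] at hdom ⊢
  refine hdom.mono' hmeas ?_
  filter_upwards [ae_restrict_mem (measurableSet_Ioc.prod measurableSet_Ioi)] with p hp
  rw [Function.uncurry_apply_pair, norm_of_nonneg qkstarIntegrand_pos.le, one_mul]
  refine (qkstarIntegrand_le hκ (le_of_lt hp.2)).trans (exp_le_exp.2 ?_)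
  nlinarith [hp.1.1, mem_Ioi.1 hp.2]

/-- Fubini, using `einKernel x * exp (-(u * x)) = ∫ t in u..u + 1, exp (-(t * x))`. -/
lemma integral_einKernel_mul_qkstarIntegrand (hκ : 0 ≤ κ) (hu : 0 < u) :
    ∫ x in Ioi 0, einKernel x * qkstarIntegrand κ u x = ∫ t in u..u + 1, qkstar κ t := by
  simp_rw [intervalIntegral.integral_of_le (le_add_of_nonneg_right zero_le_one),
    qkstar_eq_integral]
  rw [integral_integral_swap (integrable_qkstarIntegrand_prod hκ hu)]
  refine setIntegral_congr_fun measurableSet_Ioi fun x hx => ?_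
  have hsplit : ∀ t, qkstarIntegrand κ t x = exp (-(t * x)) * exp (-(κ * ein x)) := fun t => by
    rw [qkstarIntegrand, ← exp_add, sub_eq_add_neg]
  simp only [hsplit]
  rw [← intervalIntegral.integral_of_le (le_add_of_nonneg_right zero_le_one),
    intervalIntegral.integral_mul_const, intervalIntegral_exp_neg_mul (ne_of_gt hx)]
  ring

lemma integrableOn_einKernel_mul_qkstarIntegrand (hκ : 0 ≤ κ) (hu : 0 < u) :
    IntegrableOn (fun x => einKernel x * qkstarIntegrand κ u x) (Ioi 0) := by
  refine (integrableOn_qkstarIntegrand hκ hu).mono'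
    (measurable_einKernel.aestronglyMeasurable.mul
      (integrableOn_qkstarIntegrand hκ hu).aestronglyMeasurable) ?_
  filter_upwards [ae_restrict_mem measurableSet_Ioi] with x hx
  rw [norm_of_nonneg (mul_nonneg (einKernel_nonneg (le_of_lt hx)) qkstarIntegrand_pos.le)]
  exact mul_le_of_le_one_left qkstarIntegrand_pos.le (einKernel_le_one (le_of_lt hx))

/-- Integrating `(qkstarIntegrand κ u)' = (-u - κ * einKernel) * qkstarIntegrand κ u` over
`(0, ∞)` and applying Fubini to the `einKernel` term. -/
theorem mul_qkstar_add_integral_qkstar (hκ : 0 ≤ κ) (hu : 0 < u) :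
    u * qkstar κ u + κ * ∫ t in u..u + 1, qkstar κ t = 1 := by
  have hI := integrableOn_qkstarIntegrand hκ hu
  have hkI := integrableOn_einKernel_mul_qkstarIntegrand hκ hu
  have hlim : Tendsto (qkstarIntegrand κ u) atTop (𝓝 0) := by
    refine squeeze_zero' (Eventually.of_forall fun _ => qkstarIntegrand_pos.le)
      ((eventually_ge_atTop 0).mono fun x hx => qkstarIntegrand_le hκ hx) ?_
    exact tendsto_exp_atBot.comp (tendsto_id.const_mul_atTop_of_neg (neg_neg_of_pos hu))
  have hFTC := integral_Ioi_of_hasDerivAt_of_tendsto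
    ((continuousOn_qkstarIntegrand κ u).continuousWithinAt self_mem_Ici)
    (fun x hx => hasDerivAt_qkstarIntegrand hx)
    (IntegrableOn.congr_fun ((hI.const_mul (-u)).sub (hkI.const_mul κ))
      (fun x _ => by simp only [Pi.sub_apply]; ring) measurableSet_Ioi) hlim
  have hsplit : ∀ x, (-u - κ * einKernel x) * qkstarIntegrand κ u x
      = -u * qkstarIntegrand κ u x - κ * (einKernel x * qkstarIntegrand κ u x) := fun x => by ring
  simp only [hsplit] at hFTC
  rw [integral_sub (hI.const_mul _) (hkI.const_mul _), integral_const_mul, integral_const_mul,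
    integral_einKernel_mul_qkstarIntegrand hκ hu, ← qkstar_eq_integral] at hFTC
  have hI0 : qkstarIntegrand κ u 0 = 1 := by simp [qkstarIntegrand, ein]
  linarith

lemma qkstar_le_inv (hκ : 0 ≤ κ) (hu : 0 < u) : qkstar κ u ≤ u⁻¹ := by
  rw [← one_div, le_div_iff₀ hu, mul_comm]
  have := mul_qkstar_add_integral_qkstar hκ hu
  have : 0 ≤ κ * ∫ t in u..u + 1, qkstar κ t :=
    mul_nonneg hκ (intervalIntegral.integral_nonneg (by linarith) fun t _ => qkstar_nonneg κ t)
  linarith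

lemma qkstar_isBigO_exp {lam : ℝ} (hκ : 0 ≤ κ) (hlam : 0 ≤ lam) :
    qkstar κ =O[atTop] fun u => exp (lam * u) := by
  refine IsBigO.of_bound 1 ((eventually_ge_atTop 1).mono fun u hu => ?_)
  have hu0 : 0 < u := one_pos.trans_le hu
  rw [norm_of_nonneg (qkstar_nonneg κ u), norm_of_nonneg (exp_pos _).le, one_mul]
  calc qkstar κ u ≤ u⁻¹ := qkstar_le_inv hκ hu0
    _ ≤ 1 := inv_le_one_of_one_le₀ hu
    _ ≤ exp (lam * u) := one_le_exp (by positivity)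

end Qkstar

section FirstIntegral

variable {κ : ℝ} {f q : ℝ → ℝ}

lemma hasDerivAt_intervalIntegral_add_one {a w : ℝ} (hf : ContinuousOn f (Ioi a)) (hw : a < w) :
    HasDerivAt (fun y => ∫ t in y..y + 1, f t) (f (w + 1) - f w) w := by
  have hint : ∀ {x y}, a < x → a < y → IntervalIntegrable f volume x y := fun hx hy =>
    (hf.mono fun _ ht => lt_of_lt_of_le (lt_min hx hy) ht.1).intervalIntegrable
  have hprim : ∀ z, a < z → HasDerivAt (fun y => ∫ t in w..y, f t) (f z) z := fun z hz =>
    intervalIntegral.integral_hasDerivAt_right (hint hw hz)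
      (hf.stronglyMeasurableAtFilter isOpen_Ioi z hz) (hf.continuousAt (Ioi_mem_nhds hz))
  have hsub : HasDerivAt (fun y => (∫ t in w..y + 1, f t) - ∫ t in w..y, f t)
      (f (w + 1) - f w) w :=
    ((hprim (w + 1) (by linarith)).comp_add_const w 1).sub (hprim w hw)
  refine hsub.congr_of_eventuallyEq ?_
  filter_upwards [Ioi_mem_nhds hw] with y hy
  exact (intervalIntegral.integral_interval_sub_left (hint hw (by linarith [mem_Ioi.1 hy]))
    (hint hw hy)).symm

theorem exists_mul_add_integral_eq (hdiff : ∀ u : ℝ, 0 < u → DifferentiableAt ℝ q u)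
    (heq : ∀ u : ℝ, 0 < u → u * deriv q u = (κ - 1) * q u - κ * q (u + 1)) :
    ∃ A, ∀ u, 0 < u → u * q u + κ * ∫ t in u..u + 1, q t = A := by
  have hcont : ContinuousOn q (Ioi 0) := fun u hu => (hdiff u hu).continuousAt.continuousWithinAt
  have hderiv : ∀ u, 0 < u →
      HasDerivAt (fun y => y * q y + κ * ∫ t in y..y + 1, q t) 0 u := fun u hu => by
    refine (((hasDerivAt_id u).mul (hdiff u hu).hasDerivAt).add
      ((hasDerivAt_intervalIntegral_add_one hcont hu).const_mul κ)).congr_deriv ?_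
    simp only [id, one_mul]
    linarith [heq u hu]
  refine ⟨1 * q 1 + κ * ∫ t in (1 : ℝ)..1 + 1, q t, fun u hu => ?_⟩
  exact isOpen_Ioi.is_const_of_deriv_eq_zero isPreconnected_Ioi
    (fun y hy => (hderiv y hy).differentiableAt.differentiableWithinAt)
    (fun y hy => (hderiv y hy).deriv) hu (mem_Ioi.2 one_pos)

lemma mul_add_integral_sub_mul_eq_zero {p : ℝ → ℝ} {A u : ℝ} (hq : ContinuousOn q (Ioi 0))
    (hp : ContinuousOn p (Ioi 0)) (hu : 0 < u)
    (hqA : u * q u + κ * ∫ t in u..u + 1, q t = A) (hp1 : u * p u + κ * ∫ t in u..u + 1, p t = 1) :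
    u * (q u - A * p u) + κ * ∫ t in u..u + 1, (q t - A * p t) = 0 := by
  have hIcc : Icc u (u + 1) ⊆ Ioi 0 := (Icc_subset_Ioi_iff (by linarith)).2 hu
  rw [intervalIntegral.integral_sub
    ((hq.mono hIcc).intervalIntegrable_of_Icc (μ := volume) (by linarith))
    (((hp.mono hIcc).intervalIntegrable_of_Icc (by linarith)).const_mul A),
    intervalIntegral.integral_const_mul]
  linear_combination hqA - A * hp1

end FirstIntegral

section Vanishing

variable {κ : ℝ} {f : ℝ → ℝ}

lemma mul_abs_le_integral_abs {u : ℝ} {g : ℝ → ℝ} (hκ : 0 ≤ κ) (hu : 0 ≤ u)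
    (h : u * g u + κ * ∫ t in u..u + 1, g t = 0) :
    u * |g u| ≤ κ * ∫ t in u..u + 1, |g t| := by
  calc u * |g u| = |u * g u| := by rw [abs_mul, abs_of_nonneg hu]
    _ = κ * |∫ t in u..u + 1, g t| := by
      rw [eq_neg_of_add_eq_zero_left h, abs_neg, abs_mul, abs_of_nonneg hκ]
    _ ≤ κ * ∫ t in u..u + 1, |g t| := by
      gcongr
      exact intervalIntegral.abs_integral_le_integral_abs (by linarith)

/-- Each application of `u * f u ≤ κ * ∫ t in u..u + 1, f t` gains a factor `κ e^λ / u ≤ 1/2`. -/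
lemma le_div_two_pow_of_mul_le_integral {lam C u₁ : ℝ} (hκ : 0 ≤ κ) (hlam : 0 ≤ lam) (hC : 0 ≤ C)
    (hu₁ : 0 < u₁) (hκu₁ : 2 * κ * exp lam ≤ u₁)
    (hint : ∀ u, u₁ ≤ u → IntervalIntegrable f volume u (u + 1))
    (hrec : ∀ u, u₁ ≤ u → u * f u ≤ κ * ∫ t in u..u + 1, f t)
    (hbound : ∀ u, u₁ ≤ u → f u ≤ C * exp (lam * u)) (n : ℕ) :
    ∀ u, u₁ ≤ u → f u ≤ C * exp (lam * u) / 2 ^ n := by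
  induction n with
  | zero => simpa using hbound
  | succ n ih =>
    intro u hu
    have hu0 : 0 < u := hu₁.trans_le hu
    have hstep : ∫ t in u..u + 1, f t ≤ C * exp (lam * (u + 1)) / 2 ^ n := by
      have hmono := intervalIntegral.integral_mono_on (by linarith) (hint u hu)
        intervalIntegrable_const fun t ht => (ih t (hu.trans ht.1)).trans
          (by gcongr; exact ht.2 : C * exp (lam * t) / 2 ^ n ≤ C * exp (lam * (u + 1)) / 2 ^ n)
      simpa using hmono
    have : u * f u ≤ u * (C * exp (lam * u) / 2 ^ (n + 1)) := by
      calc u * f u ≤ κ * (C * exp (lam * (u + 1)) / 2 ^ n) :=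
            (hrec u hu).trans (mul_le_mul_of_nonneg_left hstep hκ)
        _ = κ * exp lam * (C * exp (lam * u) / 2 ^ n) := by
            rw [mul_add, mul_one, exp_add]; ring
        _ ≤ u / 2 * (C * exp (lam * u) / 2 ^ n) := by gcongr; linarith
        _ = u * (C * exp (lam * u) / 2 ^ (n + 1)) := by ring
    exact le_of_mul_le_mul_left this hu0

theorem eventually_eq_zero_of_mul_le_integral {lam : ℝ} (hκ : 0 ≤ κ) (hlam : 0 ≤ lam)
    (hf : ContinuousOn f (Ioi 0)) (hf0 : ∀ u, 0 < u → 0 ≤ f u)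
    (hrec : ∀ u, 0 < u → u * f u ≤ κ * ∫ t in u..u + 1, f t)
    (hO : f =O[atTop] fun u => exp (lam * u)) :
    ∀ᶠ u in atTop, f u = 0 := by
  obtain ⟨C, hC, hCO⟩ := hO.exists_pos
  obtain ⟨u₁, hu₁⟩ := eventually_atTop.1 hCO.bound
  set u₂ := max (max u₁ 1) (2 * κ * exp lam)
  have hu₂ : 0 < u₂ := zero_lt_one.trans_le ((le_max_right _ _).trans (le_max_left _ _))
  have hu₁₂ : u₁ ≤ u₂ := (le_max_left _ _).trans (le_max_left _ _)
  have hbound : ∀ u, u₂ ≤ u → f u ≤ C * exp (lam * u) := fun u hu => by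
    simpa [norm_of_nonneg (exp_pos _).le] using (le_abs_self _).trans (hu₁ u (hu₁₂.trans hu))
  have hhalve := le_div_two_pow_of_mul_le_integral hκ hlam hC.le hu₂ (le_max_right _ _)
    (fun u hu => (hf.mono fun t ht => hu₂.trans_le (hu.trans ht.1)).intervalIntegrable_of_Icc
      (by linarith))
    (fun u hu => hrec u (hu₂.trans_le hu)) hbound
  filter_upwards [eventually_ge_atTop u₂] with u hu
  have hlim : Tendsto (fun n : ℕ => C * exp (lam * u) / 2 ^ n) atTop (𝓝 0) :=
    tendsto_const_nhds.div_atTop (tendsto_pow_atTop_atTop_of_one_lt one_lt_two)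
  exact le_antisymm (ge_of_tendsto' hlim fun n => hhalve n u hu) (hf0 u (hu₂.trans_le hu))

theorem eqOn_zero_of_mul_le_integral_of_eventually_eq_zero (hκ : 0 ≤ κ)
    (hf : ContinuousOn f (Ioi 0)) (hf0 : ∀ u, 0 < u → 0 ≤ f u)
    (hrec : ∀ u, 0 < u → u * f u ≤ κ * ∫ t in u..u + 1, f t) (hzero : ∀ᶠ u in atTop, f u = 0) :
    EqOn f 0 (Ioi 0) := by
  obtain ⟨v, hv⟩ := eventually_atTop.1 hzero
  intro w (hw : 0 < w)
  rcases le_or_gt v w with hvw | hwv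
  · exact hv w hvw
  have hint : ∀ {x y}, 0 < x → 0 < y → IntervalIntegrable f volume x y := fun hx hy =>
    (hf.mono fun _ ht => lt_of_lt_of_le (lt_min hx hy) ht.1).intervalIntegrable
  set T : ℝ → ℝ := fun x => ∫ t in x..v + 1, f t
  have hTderiv : ∀ x, 0 < x → HasDerivAt T (-f x) x := fun x hx =>
    intervalIntegral.integral_hasDerivAt_left (hint hx (by linarith))
      (hf.stronglyMeasurableAtFilter isOpen_Ioi x hx) (hf.continuousAt (Ioi_mem_nhds hx))
  have hTv : T v = 0 := by
    change ∫ t in v..v + 1, f t = 0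
    rw [intervalIntegral.integral_congr (g := fun _ => 0) fun t ht => hv t ?_,
      intervalIntegral.integral_zero]
    rw [uIcc_of_le (by linarith)] at ht
    exact ht.1
  have hbound : ∀ x, w ≤ x → x ≤ v → f x ≤ κ / w * T x := fun x hwx hxv => by
    have hx : 0 < x := hw.trans_le hwx
    have htail : ∫ t in x..x + 1, f t ≤ T x :=
      intervalIntegral.integral_mono_interval le_rfl (by linarith) (by linarith)
        ((ae_restrict_mem measurableSet_Ioc).mono fun t ht => hf0 t (hx.trans ht.1))
        (hint hx (by linarith))
    have : 0 ≤ ∫ t in x..x + 1, f t := intervalIntegral.integral_nonneg (by linarith)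
      fun t ht => hf0 t (hx.trans_le ht.1)
    calc f x ≤ κ / x * ∫ t in x..x + 1, f t := by
          rw [div_mul_eq_mul_div, le_div_iff₀ hx, mul_comm]; exact hrec x hx
      _ ≤ κ / w * T x := by gcongr
  have hTneg : ∀ y, y < 0 → HasDerivAt (T ∘ Neg.neg) (f (-y)) y := fun y hy => by
    simpa using (hTderiv (-y) (neg_pos.2 hy)).comp y (hasDerivAt_neg y)
  -- Grönwall for `T` backwards from `v`, i.e. for `T ∘ Neg.neg` forwards from `-v`.
  have hTw := eq_zero_of_abs_deriv_le_mul_abs_self_of_eq_zero_right (a := -v) (K := κ / w)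
    (fun y hy => (hTneg y (by linarith [hy.2])).continuousAt.continuousWithinAt)
    (fun y hy => (hTneg y (by linarith [hy.2])).hasDerivWithinAt) (by simpa using hTv)
    (fun y hy => ?_) (-w) ⟨by linarith, le_rfl⟩
  · have := hbound w le_rfl hwv.le
    rw [Function.comp_apply, neg_neg] at hTw
    rw [hTw, mul_zero] at this
    exact le_antisymm this (hf0 w hw)
  · have hx := hbound (-y) (by linarith [hy.2]) (by linarith [hy.1])
    rw [norm_of_nonneg (hf0 _ (by linarith [hy.2])), Function.comp_apply]
    exact hx.trans (mul_le_mul_of_nonneg_left (le_norm_self _) (by positivity))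

theorem eqOn_zero_of_mul_le_integral {lam : ℝ} (hκ : 0 ≤ κ) (hlam : 0 ≤ lam)
    (hf : ContinuousOn f (Ioi 0)) (hf0 : ∀ u, 0 < u → 0 ≤ f u)
    (hrec : ∀ u, 0 < u → u * f u ≤ κ * ∫ t in u..u + 1, f t)
    (hO : f =O[atTop] fun u => exp (lam * u)) :
    EqOn f 0 (Ioi 0) :=
  eqOn_zero_of_mul_le_integral_of_eventually_eq_zero hκ hf hf0 hrec
    (eventually_eq_zero_of_mul_le_integral hκ hlam hf hf0 hrec hO)

end Vanishing

theorem stmt8 (κ : ℝ) (hκ : 0 < κ) (q : ℝ → ℝ)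
    (hdiff : ∀ u : ℝ, 0 < u → DifferentiableAt ℝ q u)
    (heq : ∀ u : ℝ, 0 < u → u * deriv q u = (κ - 1) * q u - κ * q (u + 1))
    (hnp : ∀ A : ℝ, ∃ u : ℝ, 0 < u ∧ q u ≠ A * qkstar κ u) :
    ∀ lam : ℝ, 0 < lam → ∀ B : ℝ, 0 < B → ∀ u₀ : ℝ, 0 < u₀ →
      ∃ u : ℝ, u₀ ≤ u ∧ B * Real.exp (lam * u) < |q u| := by
  intro lam hlam B _ u₀ _
  by_contra! hbounded
  obtain ⟨A, hA⟩ := exists_mul_add_integral_eq hdiff heq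
  set g : ℝ → ℝ := fun u => q u - A * qkstar κ u
  have hq_cont : ContinuousOn q (Ioi 0) := fun u hu =>
    (hdiff u hu).continuousAt.continuousWithinAt
  have hqk_cont : ContinuousOn (qkstar κ) (Ioi 0) := fun u hu =>
    (continuousAt_qkstar hκ.le hu).continuousWithinAt
  have hg_cont : ContinuousOn g (Ioi 0) := hq_cont.sub (hqk_cont.const_smul A)
  have hg_rec : ∀ u, 0 < u → u * |g u| ≤ κ * ∫ t in u..u + 1, |g t| := fun u hu =>
    mul_abs_le_integral_abs hκ.le hu.le (mul_add_integral_sub_mul_eq_zero hq_cont hqk_cont hu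
      (hA u hu) (mul_qkstar_add_integral_qkstar hκ.le hu))
  have hg_O : g =O[atTop] fun u => exp (lam * u) :=
    (IsBigO.of_bound B ((eventually_ge_atTop u₀).mono fun u hu => by
      simpa [norm_of_nonneg (exp_pos _).le] using hbounded u hu)).sub
      ((qkstar_isBigO_exp hκ.le hlam.le).const_mul_left A)
  obtain ⟨u, hu, hne⟩ := hnp A
  have hgu := eqOn_zero_of_mul_le_integral hκ.le hlam.le hg_cont.abs (fun _ _ => abs_nonneg _)
    hg_rec hg_O.abs_left hu
  exact hne (sub_eq_zero.1 (abs_eq_zero.1 hgu))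
end

section
/- Suppose q : ℝ → ℂ solves (E+). Let c ≥ 0 be real and let p : ℝ → ℂ be continuous on (c, ∞), such that the function u ↦ u·p(u) is differentiable at every u > c + v_m with (u p(u))′ = −Σ_{j=0}^m α_j p(u − v_j) for all u > c + v_m. Then there exists a complex number A such that for all u > c + v_m: u·p(u)·q(u) = A + Σ_{j=1}^m α_j ∫_{u − v_j}^u p(t)·q(t + v_j) dt. -/
/-!
The bilinear concomitant `u p(u) q(u) - ∑_{j=1}^m α_j ∫_{u-v_j}^u p(t) q(t+v_j) dt` of (E+) and
its adjoint equation has derivative zero. By the product rule and the two equations, the derivative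
of `u p(u) q(u)` is `∑_{j=0}^m α_j (p(u) q(u+v_j) - p(u-v_j) q(u))`; by the fundamental theorem of
calculus the integrals contribute the same sum over `j ≥ 1`, and the `j = 0` term vanishes because
`v_0 = 0`.
-/

open MeasureTheory Filter Set

section SlidingWindow

variable {E : Type*} [NormedAddCommGroup E] [NormedSpace ℝ E] [CompleteSpace E]
  {f : ℝ → E} {a c d u : ℝ}

theorem ContinuousOn.hasDerivAt_intervalIntegral_Ioi (hf : ContinuousOn f (Ioi c))
    (ha : c < a) (hu : c < u) : HasDerivAt (fun x => ∫ t in a..x, f t) (f u) u :=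
  intervalIntegral.integral_hasDerivAt_right
    ((hf.mono fun _ ht => (lt_min ha hu).trans_le ht.1).intervalIntegrable)
    (hf.stronglyMeasurableAtFilter isOpen_Ioi u hu) (hf.continuousAt (isOpen_Ioi.mem_nhds hu))

theorem ContinuousOn.hasDerivAt_intervalIntegral_sub_const (hf : ContinuousOn f (Ioi c))
    (hu : c < u) (hud : c < u - d) :
    HasDerivAt (fun x => ∫ t in (x - d)..x, f t) (f u - f (u - d)) u := by
  have hright := hf.hasDerivAt_intervalIntegral_Ioi hu hu
  have hleft := (hf.hasDerivAt_intervalIntegral_Ioi hu hud).comp_sub_const u d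
  refine (hright.sub hleft).congr_of_eventuallyEq ?_
  filter_upwards [lt_mem_nhds hu, lt_mem_nhds (show c + d < u by linarith)] with x hx hxd
  have hint : ∀ y, c < y → IntervalIntegrable f volume u y := fun y hy =>
    (hf.mono fun _ ht => (lt_min hu hy).trans_le ht.1).intervalIntegrable
  exact (intervalIntegral.integral_interval_sub_left (hint x hx) (hint (x - d) (by linarith))).symm

end SlidingWindow

theorem SolvesEplus.continuousOn {m : ℕ} {v : ℕ → ℝ} {α : ℕ → ℂ} {q : ℝ → ℂ}
    (hq : SolvesEplus m v α q) : ContinuousOn q (Ioi 0) := fun x hx =>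
  (hq x hx).1.continuousAt.continuousWithinAt

section Concomitant

variable (m : ℕ) (v : ℕ → ℝ) (α : ℕ → ℂ) (p q : ℝ → ℂ)

noncomputable def concomitant (u : ℝ) : ℂ :=
  u * p u * q u - ∑ j ∈ Finset.Icc 1 m, α j * ∫ t in (u - v j)..u, p t * q (t + v j)

variable {m v α p q}

theorem hasDerivAt_concomitant {u : ℝ} {q' : ℂ} (hv0 : v 0 = 0)
    (hp : HasDerivAt (fun x : ℝ => (x : ℂ) * p x)
      (-∑ j ∈ Finset.range (m + 1), α j * p (u - v j)) u)
    (hq : HasDerivAt q q' u) (hq' : (u : ℂ) * q' = ∑ j ∈ Finset.range (m + 1), α j * q (u + v j))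
    (hwindow : ∀ j ∈ Finset.Icc 1 m,
      HasDerivAt (fun x => ∫ t in (x - v j)..x, p t * q (t + v j))
        (p u * q (u + v j) - p (u - v j) * q u) u) :
    HasDerivAt (concomitant m v α p q) 0 u := by
  have hterm0 : ∑ j ∈ Finset.range (m + 1), α j * (p u * q (u + v j) - p (u - v j) * q u) =
      ∑ j ∈ Finset.Icc 1 m, α j * (p u * q (u + v j) - p (u - v j) * q u) := by
    refine (Finset.sum_subset (fun j hj => ?_) fun j hj hj' => ?_).symm
    · simp only [Finset.mem_Icc, Finset.mem_range] at hj ⊢; omega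
    · obtain rfl : j = 0 := by simp only [Finset.mem_Icc, Finset.mem_range] at hj hj'; omega
      simp [hv0]
  refine ((hp.mul hq).sub
    (HasDerivAt.fun_sum fun j hj => (hwindow j hj).const_mul (α j))).congr_deriv ?_
  rw [← hterm0, mul_assoc, mul_left_comm, hq', neg_mul, Finset.sum_mul, Finset.mul_sum,
    ← Finset.sum_neg_distrib, ← Finset.sum_add_distrib, ← Finset.sum_sub_distrib]
  exact Finset.sum_eq_zero fun j _ => by ring

end Concomitant

theorem stmt10_general (m : ℕ) (v : ℕ → ℝ) (α : ℕ → ℂ)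
    (hv0 : v 0 = 0) (hv : ∀ i, i < m → v i < v (i + 1))
    (q : ℝ → ℂ) (hq : SolvesEplus m v α q)
    (c : ℝ) (hc : 0 ≤ c) (p : ℝ → ℂ)
    (hpcont : ContinuousOn p (Set.Ioi c))
    (hpdiff : ∀ u : ℝ, c + v m < u → DifferentiableAt ℝ (fun x : ℝ => (x : ℂ) * p x) u)
    (hpeq : ∀ u : ℝ, c + v m < u →
      deriv (fun x : ℝ => (x : ℂ) * p x) u = -∑ j ∈ Finset.range (m + 1), α j * p (u - v j)) :
    ∃ A : ℂ, ∀ u : ℝ, c + v m < u →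
      (u : ℂ) * p u * q u = A + ∑ j ∈ Finset.Icc 1 m,
        α j * ∫ t in (u - v j)..u, p t * q (t + v j) := by
  have hv_bounds : ∀ j ≤ m, 0 ≤ v j ∧ v j ≤ v m := by
    have hmono : MonotoneOn v (Iic m) :=
      (strictMonoOn_Iic_of_lt_succ fun i hi => by simpa using hv i hi).monotoneOn
    exact fun j hj => ⟨hv0 ▸ hmono (mem_Iic.2 (Nat.zero_le m)) (mem_Iic.2 hj) (Nat.zero_le j),
      hmono (mem_Iic.2 hj) (mem_Iic.2 le_rfl) hj⟩
  have hderiv : ∀ u ∈ Ioi (c + v m), HasDerivAt (concomitant m v α p q) 0 u := by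
    intro u hu
    rw [mem_Ioi] at hu
    have hu0 : 0 < u := by linarith [(hv_bounds m le_rfl).1]
    refine hasDerivAt_concomitant hv0 (hpeq u hu ▸ (hpdiff u hu).hasDerivAt)
      (hq u hu0).1.hasDerivAt (hq u hu0).2 fun j hj => ?_
    obtain ⟨hvj0, hvjm⟩ := hv_bounds j (Finset.mem_Icc.1 hj).2
    have hshift : ContinuousOn (fun t => p t * q (t + v j)) (Ioi c) :=
      hpcont.mul <| hq.continuousOn.comp (continuousOn_id.add continuousOn_const) fun t ht => by
        simp only [mem_Ioi] at ht ⊢; linarith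
    simpa only [sub_add_cancel] using
      hshift.hasDerivAt_intervalIntegral_sub_const (d := v j) (by linarith) (by linarith)
  obtain ⟨A, hA⟩ := isOpen_Ioi.exists_is_const_of_deriv_eq_zero isPreconnected_Ioi
    (fun x hx => (hderiv x hx).differentiableAt.differentiableWithinAt)
    fun x hx => (hderiv x hx).deriv
  refine ⟨A, fun u hu => ?_⟩
  have hAu := hA u hu
  rw [concomitant] at hAu
  linear_combination hAu

theorem stmt10 (m : ℕ) (v : ℕ → ℝ) (α : ℕ → ℂ)
    (hv0 : v 0 = 0) (hv : ∀ i, i < m → v i < v (i + 1))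
    (hα : ∀ j, 1 ≤ j → j ≤ m → α j ≠ 0)
    (q : ℝ → ℂ) (hq : SolvesEplus m v α q)
    (c : ℝ) (hc : 0 ≤ c) (p : ℝ → ℂ)
    (hpcont : ContinuousOn p (Set.Ioi c))
    (hpdiff : ∀ u : ℝ, c + v m < u → DifferentiableAt ℝ (fun x : ℝ => (x : ℂ) * p x) u)
    (hpeq : ∀ u : ℝ, c + v m < u →
      deriv (fun x : ℝ => (x : ℂ) * p x) u = -∑ j ∈ Finset.range (m + 1), α j * p (u - v j)) :
    ∃ A : ℂ, ∀ u : ℝ, c + v m < u →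
      (u : ℂ) * p u * q u = A + ∑ j ∈ Finset.Icc 1 m,
        α j * ∫ t in (u - v j)..u, p t * q (t + v j) :=
  stmt10_general m v α hv0 hv q hq c hc p hpcont hpdiff hpeq
end
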